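/- arXiv:1706.03866 — 7 statements merged into one kernel-verified Lean document; each statement's English description precedes it below -/
import Mathlib

section
/- For every finite message set M = {1,...,M}, finite set Z, and conditional probability distribution P_{Z|W} from M to Z, the semantic security metric is bounded by the maximum total variation secrecy: SS(W|Z) ≤ S_max(W|Z). -/
open Finset

noncomputable section

/-- Total variation distance between two finitely supported distributions. -/
def tv {A : Type*} [Fintype A] (P Q : A → ℝ) : ℝ := (1 / 2) * ∑ a, |P a - Q a|

lemma tv_key {Z : Type*} [Fintype Z] (P Q h : Z → ℝ)
    (hP : ∑ z, P z = 1) (hQ : ∑ z, Q z = 1)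
    (h0 : ∀ z, 0 ≤ h z) (h1 : ∀ z, h z ≤ 1) :
    ∑ z, (P z - Q z) * h z ≤ tv P Q := by
  have e : ∑ z, (P z - Q z) * h z = ∑ z, (P z - Q z) * (h z - 1/2) := by
    have e2 : ∀ z ∈ Finset.univ, (P z - Q z) * h z
        = (P z - Q z) * (h z - 1/2) + ((1/2) * P z - (1/2) * Q z) := by
      intro z _; ring
    rw [Finset.sum_congr rfl e2, Finset.sum_add_distrib, Finset.sum_sub_distrib,
      ← Finset.mul_sum, ← Finset.mul_sum, hP, hQ]
    ring
  rw [e, tv, Finset.mul_sum]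
  apply Finset.sum_le_sum
  intro z _
  calc (P z - Q z) * (h z - 1/2) ≤ |(P z - Q z) * (h z - 1/2)| := le_abs_self _
    _ = |P z - Q z| * |h z - 1/2| := abs_mul _ _
    _ ≤ |P z - Q z| * (1/2) := by
        apply mul_le_mul_of_nonneg_left _ (abs_nonneg _)
        rw [abs_le]; constructor <;> [linarith [h0 z]; linarith [h1 z]]
    _ = 1/2 * |P z - Q z| := by ring

/-- The semantic security metric is bounded by the maximum total
variation secrecy: `SS(W|Z) ≤ S_max(W|Z)`.  `SS(W|Z)` is the supremum, over all
message distributions `PW`, finite sets `A`, and randomized maps `F : M → A`,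
`G : Z → A` (stochastic kernels applied conditionally independently given `(W,Z)`),
of `P[f(W) = g(Z)] − max_{a∈A} P[f(W) = a]`.  Stating the inequality for every
such choice is equivalent to bounding the supremum. -/
theorem ss_le_smax
    {M Z : Type*} [Fintype M] [Nonempty M] [Fintype Z]
    (PZW : M → Z → ℝ)
    (hpos : ∀ m z, 0 ≤ PZW m z)
    (hsum : ∀ m, ∑ z, PZW m z = 1)
    (QZ : Z → ℝ)
    (hQZ : ∀ z, QZ z = (Fintype.card M : ℝ)⁻¹ * ∑ m, PZW m z)
    (A : Type) [Fintype A]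
    (PW : M → ℝ) (hPWpos : ∀ m, 0 ≤ PW m) (hPWsum : ∑ m, PW m = 1)
    (F : M → A → ℝ) (hFpos : ∀ m a, 0 ≤ F m a) (hFsum : ∀ m, ∑ a, F m a = 1)
    (G : Z → A → ℝ) (hGpos : ∀ z a, 0 ≤ G z a) (hGsum : ∀ z, ∑ a, G z a = 1) :
    (∑ m, ∑ z, PW m * PZW m z * ∑ a, F m a * G z a)
        - (⨆ a, ∑ m, PW m * F m a)
      ≤ ⨆ m, tv (PZW m) QZ := by
  have hAne : Nonempty A := by
    by_contra hA
    have : (∑ a, F (Classical.arbitrary M) a) = 0 := by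
      rw [Finset.sum_eq_zero]; intro a _; exact absurd ⟨a⟩ hA
    rw [hFsum] at this; norm_num at this
  -- basic facts about QZ
  have hQpos : ∀ z, 0 ≤ QZ z := by
    intro z; rw [hQZ]
    exact mul_nonneg (by positivity) (Finset.sum_nonneg fun m _ => hpos m z)
  have hQsum : ∑ z, QZ z = 1 := by
    have e1 : ∑ z, ∑ m, PZW m z = (Fintype.card M : ℝ) := by
      rw [Finset.sum_comm]; simp [hsum]
    simp only [hQZ, ← Finset.mul_sum, e1]
    rw [inv_mul_cancel₀]
    exact_mod_cast Fintype.card_ne_zero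
  -- h_m z ∈ [0,1]
  have hh0 : ∀ m z, 0 ≤ ∑ a, F m a * G z a := fun m z =>
    Finset.sum_nonneg fun a _ => mul_nonneg (hFpos m a) (hGpos z a)
  have hh1 : ∀ m z, ∑ a, F m a * G z a ≤ 1 := by
    intro m z
    calc ∑ a, F m a * G z a ≤ ∑ a, F m a * 1 :=
          Finset.sum_le_sum fun a _ => mul_le_mul_of_nonneg_left
            ((by calc G z a ≤ ∑ a, G z a := Finset.single_le_sum (fun a _ => hGpos z a) (Finset.mem_univ a)
                 _ = 1 := hGsum z)) (hFpos m a)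
      _ = 1 := by simp [hFsum m]
  set S : ℝ := ⨆ a, ∑ m, PW m * F m a with hS
  have hSle : ∀ a, ∑ m, PW m * F m a ≤ S := fun a =>
    le_ciSup (f := fun a => ∑ m, PW m * F m a)
      (Set.Finite.bddAbove (Set.finite_range _)) a
  have hSnn : 0 ≤ S := le_trans (Finset.sum_nonneg fun m _ =>
    mul_nonneg (hPWpos m) (hFpos m (Classical.arbitrary A))) (hSle (Classical.arbitrary A))
  -- bound the "Q part"
  have hTbound : ∑ m, ∑ z, PW m * QZ z * ∑ a, F m a * G z a ≤ S := by
    have : ∑ m, ∑ z, PW m * QZ z * ∑ a, F m a * G z a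
        = ∑ z, QZ z * ∑ a, (∑ m, PW m * F m a) * G z a := by
      simp only [Finset.mul_sum, Finset.sum_mul]
      rw [Finset.sum_comm]
      apply Finset.sum_congr rfl; intro z _
      rw [Finset.sum_comm]
      apply Finset.sum_congr rfl; intro a _
      apply Finset.sum_congr rfl; intro m _
      ring
    rw [this]
    calc ∑ z, QZ z * ∑ a, (∑ m, PW m * F m a) * G z a
        ≤ ∑ z, QZ z * ∑ a, S * G z a := by
          apply Finset.sum_le_sum; intro z _
          apply mul_le_mul_of_nonneg_left _ (hQpos z)
          apply Finset.sum_le_sum; intro a _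
          exact mul_le_mul_of_nonneg_right (hSle a) (hGpos z a)
      _ = ∑ z, QZ z * S := by
          apply Finset.sum_congr rfl; intro z _
          rw [← Finset.mul_sum, hGsum z, mul_one]
      _ = S := by rw [← Finset.sum_mul, hQsum, one_mul]
  -- the main difference bound
  have hmain : (∑ m, ∑ z, PW m * PZW m z * ∑ a, F m a * G z a)
      - (∑ m, ∑ z, PW m * QZ z * ∑ a, F m a * G z a)
      ≤ ⨆ m, tv (PZW m) QZ := by
    rw [← Finset.sum_sub_distrib]
    have hstep : ∀ m, (∑ z, PW m * PZW m z * ∑ a, F m a * G z a)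
        - (∑ z, PW m * QZ z * ∑ a, F m a * G z a)
        ≤ PW m * tv (PZW m) QZ := by
      intro m
      rw [← Finset.sum_sub_distrib]
      have : ∀ z, PW m * PZW m z * (∑ a, F m a * G z a)
          - PW m * QZ z * (∑ a, F m a * G z a)
          = PW m * ((PZW m z - QZ z) * ∑ a, F m a * G z a) := by intro z; ring
      simp only [this, ← Finset.mul_sum]
      exact mul_le_mul_of_nonneg_left
        (tv_key _ _ _ (hsum m) hQsum (hh0 m) (hh1 m)) (hPWpos m)
    calc ∑ m, ((∑ z, PW m * PZW m z * ∑ a, F m a * G z a)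
          - (∑ z, PW m * QZ z * ∑ a, F m a * G z a))
        ≤ ∑ m, PW m * tv (PZW m) QZ := Finset.sum_le_sum fun m _ => hstep m
      _ ≤ ∑ m, PW m * (⨆ m, tv (PZW m) QZ) := by
          apply Finset.sum_le_sum; intro m _
          exact mul_le_mul_of_nonneg_left
            (le_ciSup (f := fun m => tv (PZW m) QZ)
              (Set.Finite.bddAbove (Set.finite_range _)) m) (hPWpos m)
      _ = ⨆ m, tv (PZW m) QZ := by rw [← Finset.sum_mul, hPWsum, one_mul]
  linarith
end
end

section
/- Let X, K, Z be finite sets and let P_{XZ} be a probability distribution on X × Z with Z-marginal P_Z. Set L := |X|/|K| (a positive real). Then for every γ > 0 and every probability distribution Q_Z on Z with Q_Z(z) > 0 for all z, there exists a function g : X → K such that S(g(X)|Z) ≤ E_γ(P_{XZ}, Q_X^unif × Q_Z) + (1/2)·√( (γ/L)·E_{(X,Z)~P_{XZ}}[ exp(−|ı(X;Z) − log γ|) ] ). -/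
open Finset

noncomputable section

/-- The `E_γ` metric `E_γ(P,Q) = ∑_a max (P a − γ·Q a) 0`. -/
def Egamma {A : Type*} [Fintype A] (γ : ℝ) (P Q : A → ℝ) : ℝ :=
  ∑ a, max (P a - γ * Q a) 0

section aux
variable {X K : Type*} [Fintype X] [Fintype K] [DecidableEq X] [DecidableEq K] [Nonempty K]

lemma count_eq (x x' : X) (h : x ≠ x') :
    ∑ g : X → K, (if g x = g x' then (1:ℝ) else 0)
      = (Fintype.card (X → K) : ℝ) / (Fintype.card K : ℝ) := by
  have hcard : Fintype.card (X → K) = Fintype.card K * Fintype.card ({j // j ≠ x} → K) := by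
    rw [Fintype.card_congr (Equiv.funSplitAt x K), Fintype.card_prod]
  have hsum : ∑ g : X → K, (if g x = g x' then (1:ℝ) else 0)
      = ∑ p : K × ({j // j ≠ x} → K), (if p.1 = p.2 ⟨x', Ne.symm h⟩ then (1:ℝ) else 0) := by
    refine Fintype.sum_equiv (Equiv.funSplitAt x K) _ _ fun g => ?_
    simp [Equiv.funSplitAt_apply]
  rw [hsum, Fintype.sum_prod_type_right]
  have hone : ∀ f : {j // j ≠ x} → K,
      (∑ k : K, if k = f ⟨x', Ne.symm h⟩ then (1:ℝ) else 0) = 1 := by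
    intro f; simp
  simp only [hone]
  rw [Finset.sum_const, Finset.card_univ, nsmul_eq_mul, mul_one, hcard]
  have hm : (Fintype.card K : ℝ) ≠ 0 := by exact_mod_cast Fintype.card_ne_zero
  push_cast
  field_simp

omit [Nonempty K] in
lemma key_ite (u v : K) (c d : ℝ) :
    ∑ k : K, (if u = k then c else 0) * (if v = k then d else 0)
      = if u = v then c * d else 0 := by
  rw [Finset.sum_eq_single u]
  · by_cases hv : u = v <;> simp [hv, eq_comm]
  · intro k _ hk; simp [Ne.symm hk]
  · simp

lemma var_bound (b : X → ℝ) :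
    ∑ g : X → K, ∑ k : K,
      ((∑ x ∈ univ.filter (fun x => g x = k), b x) - (Fintype.card K : ℝ)⁻¹ * ∑ x, b x) ^ 2
      ≤ (Fintype.card (X → K) : ℝ) * ∑ x, (b x)^2 := by
  set m := (Fintype.card K : ℝ) with hmdef
  set N := (Fintype.card (X → K) : ℝ) with hNdef
  have hm : 0 < m := by rw [hmdef]; exact_mod_cast Fintype.card_pos
  have hN : 0 ≤ N := by rw [hNdef]; positivity
  set S := ∑ x, b x with hS
  have h1 : ∀ g : X → K,
      ∑ k : K, ((∑ x ∈ univ.filter (fun x => g x = k), b x) - m⁻¹ * S) ^ 2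
        = (∑ k : K, (∑ x ∈ univ.filter (fun x => g x = k), b x) ^ 2) - m⁻¹ * S ^ 2 := by
    intro g
    have hfib : ∑ k : K, ∑ x ∈ univ.filter (fun x => g x = k), b x = S :=
      Finset.sum_fiberwise _ _ _
    have expand : ∀ k : K,
        ((∑ x ∈ univ.filter (fun x => g x = k), b x) - m⁻¹ * S) ^ 2
          = (∑ x ∈ univ.filter (fun x => g x = k), b x) ^ 2
            - (2 * (m⁻¹ * S)) * (∑ x ∈ univ.filter (fun x => g x = k), b x)
            + (m⁻¹*S)^2 := by
      intro k; ring
    rw [Finset.sum_congr rfl fun k _ => expand k]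
    rw [Finset.sum_add_distrib, Finset.sum_sub_distrib, ← Finset.mul_sum, hfib,
      Finset.sum_const, Finset.card_univ, nsmul_eq_mul, ← hmdef]
    field_simp
    ring
  have h2 : ∀ g : X → K,
      ∑ k : K, (∑ x ∈ univ.filter (fun x => g x = k), b x) ^ 2
        = ∑ x, ∑ y, (if g x = g y then b x * b y else 0) := by
    intro g
    simp only [sq, Finset.sum_filter, Finset.sum_mul_sum]
    rw [Finset.sum_comm]
    refine Finset.sum_congr rfl fun x _ => ?_
    rw [Finset.sum_comm]
    exact Finset.sum_congr rfl fun y _ => key_ite (g x) (g y) (b x) (b y)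
  have h3 : ∑ g : X → K, ∑ x, ∑ y, (if g x = g y then b x * b y else 0)
      = ∑ x, ∑ y, (if x = y then N * (b x * b y) else (N/m) * (b x * b y)) := by
    rw [Finset.sum_comm]
    refine Finset.sum_congr rfl fun x _ => ?_
    rw [Finset.sum_comm]
    refine Finset.sum_congr rfl fun y _ => ?_
    by_cases hxy : x = y
    · subst hxy
      simp only [if_pos rfl, Finset.sum_const, Finset.card_univ, nsmul_eq_mul]
      rw [hNdef]
      norm_cast
    · have hsplit : ∀ g : X → K, (if g x = g y then b x * b y else 0)
          = (b x * b y) * (if g x = g y then (1:ℝ) else 0) := by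
        intro g; split <;> ring
      simp only [hsplit]
      rw [← Finset.mul_sum, count_eq x y hxy, if_neg hxy, ← hNdef, ← hmdef]
      ring
  have h4 : ∑ x, ∑ y, (if x = y then N * (b x * b y) else (N/m) * (b x * b y))
      = (N/m) * (S*S) + (N - N/m) * ∑ x, (b x)^2 := by
    have hsplit : ∀ x y : X, (if x = y then N * (b x * b y) else (N/m) * (b x * b y))
        = (N/m) * (b x * b y) + (if x = y then (N - N/m) * (b x * b y) else 0) := by
      intro x y; split <;> ring
    simp only [hsplit, Finset.sum_add_distrib]
    congr 1
    · have hSS : S * S = ∑ x, ∑ y, b x * b y := by rw [hS, Finset.sum_mul_sum]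
      rw [hSS, Finset.mul_sum]
      exact Finset.sum_congr rfl fun x _ => (Finset.mul_sum _ _ _).symm
    · rw [Finset.mul_sum]
      refine Finset.sum_congr rfl fun x _ => ?_
      rw [Finset.sum_ite_eq univ x (fun y => (N - N/m) * (b x * b y)), if_pos (mem_univ x)]
      ring
  have hb2 : (0:ℝ) ≤ ∑ x, (b x)^2 := Finset.sum_nonneg fun x _ => sq_nonneg _
  calc ∑ g : X → K, ∑ k : K,
      ((∑ x ∈ univ.filter (fun x => g x = k), b x) - m⁻¹ * S) ^ 2
      = ∑ g : X → K, ((∑ k : K, (∑ x ∈ univ.filter (fun x => g x = k), b x) ^ 2) - m⁻¹ * S ^ 2) :=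
        Finset.sum_congr rfl fun g _ => h1 g
    _ = (∑ g : X → K, ∑ k : K, (∑ x ∈ univ.filter (fun x => g x = k), b x) ^ 2) - N * (m⁻¹ * S^2) := by
        rw [Finset.sum_sub_distrib, Finset.sum_const, Finset.card_univ, nsmul_eq_mul, ← hNdef]
    _ = ((N/m) * (S*S) + (N - N/m) * ∑ x, (b x)^2) - N * (m⁻¹ * S^2) := by
        rw [Finset.sum_congr rfl fun g _ => h2 g, h3, h4]
    _ = (N - N/m) * ∑ x, (b x)^2 := by field_simp; ring
    _ ≤ N * ∑ x, (b x)^2 := by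
        have : N - N/m ≤ N := by
          have : 0 ≤ N/m := div_nonneg hN hm.le
          linarith
        exact mul_le_mul_of_nonneg_right this hb2

lemma min_sq_eq (P Qv γ : ℝ) (hP : 0 ≤ P) (hQ : 0 < Qv) (hγ : 0 < γ) :
    (min P (γ * Qv))^2 = γ * Qv * (P * Real.exp (-|Real.log (P / Qv) - Real.log γ|)) := by
  rcases hP.eq_or_lt with h0 | hP0
  · rw [← h0]
    rw [min_eq_left (by positivity)]
    simp
  · have hgq : 0 < γ * Qv := by positivity
    have hlog : Real.log (P / Qv) - Real.log γ = Real.log (P / (γ * Qv)) := by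
      rw [Real.log_div (ne_of_gt hP0) (ne_of_gt hQ),
        Real.log_div (ne_of_gt hP0) (ne_of_gt hgq),
        Real.log_mul (ne_of_gt hγ) (ne_of_gt hQ)]
      ring
    rw [hlog]
    have hr0 : 0 < P / (γ * Qv) := by positivity
    rcases le_total 1 (P / (γ * Qv)) with h1 | h1
    · have hPge : γ * Qv ≤ P := by
        rw [le_div_iff₀ hgq] at h1; linarith
      rw [abs_of_nonneg (Real.log_nonneg h1), Real.exp_neg, Real.exp_log hr0,
        min_eq_right hPge]
      field_simp
    · have hPle : P ≤ γ * Qv := by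
        rw [div_le_one hgq] at h1; linarith
      rw [abs_of_nonpos (Real.log_nonpos hr0.le h1), neg_neg, Real.exp_log hr0,
        min_eq_left hPle]
      field_simp

end aux

/-- privacy amplification: for `L = |X|/|K|`, every `γ > 0` and every
fully supported `Q_Z`, there is a hash function `g : X → K` whose security index
`S(g(X)|Z) = d(P_{g(X)Z}, Q_K^unif × P_Z)` satisfies
`S(g(X)|Z) ≤ E_γ(P_{XZ}, Q_X^unif × Q_Z)
  + (1/2)·√((γ/L)·E_{P_{XZ}}[exp(−|ı(X;Z) − log γ|)])`,
where `ı(x;z) = log(P_{XZ}(x,z)/(Q_X^unif(x)·Q_Z(z)))`. -/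
theorem privacy_amplification
    {X K Z : Type*} [Fintype X] [Fintype K] [Fintype Z]
    [Nonempty X] [Nonempty K] [DecidableEq K]
    (PXZ : X × Z → ℝ)
    (hpos : ∀ q, 0 ≤ PXZ q) (hsum : ∑ q, PXZ q = 1)
    (L : ℝ) (hL : L = (Fintype.card X : ℝ) / (Fintype.card K : ℝ))
    (γ : ℝ) (hγ : 0 < γ)
    (QZ : Z → ℝ) (hQpos : ∀ z, 0 < QZ z) (hQsum : ∑ z, QZ z = 1) :
    ∃ g : X → K,
      tv (fun q : K × Z => ∑ x ∈ univ.filter (fun x => g x = q.1), PXZ (x, q.2))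
         (fun q : K × Z => (Fintype.card K : ℝ)⁻¹ * ∑ x, PXZ (x, q.2))
        ≤ Egamma γ PXZ (fun q : X × Z => (Fintype.card X : ℝ)⁻¹ * QZ q.2)
          + (1 / 2) * Real.sqrt ((γ / L) *
              ∑ q : X × Z, PXZ q *
                Real.exp (-|Real.log (PXZ q / ((Fintype.card X : ℝ)⁻¹ * QZ q.2))
                  - Real.log γ|)) := by
  classical
  haveI : Nonempty (X → K) := ⟨fun _ => Classical.arbitrary K⟩
  have hm : (0:ℝ) < (Fintype.card K : ℝ) := by exact_mod_cast Fintype.card_pos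
  have hn : (0:ℝ) < (Fintype.card X : ℝ) := by exact_mod_cast Fintype.card_pos
  have hLpos : 0 < L := by rw [hL]; positivity
  set m : ℝ := (Fintype.card K : ℝ) with hmdef
  set N : ℝ := (Fintype.card (X → K) : ℝ) with hNdef
  have hN : (0:ℝ) < N := by rw [hNdef]; exact_mod_cast Fintype.card_pos
  set V : ℝ := ∑ q : X × Z, PXZ q *
      Real.exp (-|Real.log (PXZ q / ((Fintype.card X : ℝ)⁻¹ * QZ q.2)) - Real.log γ|) with hVdef
  set B : X × Z → ℝ := fun q => min (PXZ q) (γ * ((Fintype.card X : ℝ)⁻¹ * QZ q.2)) with hBdef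
  set Af : X × Z → ℝ := fun q => max (PXZ q - γ * ((Fintype.card X : ℝ)⁻¹ * QZ q.2)) 0 with hAdef
  have hQ0 : ∀ z : Z, (0:ℝ) < (Fintype.card X : ℝ)⁻¹ * QZ z := by
    intro z; have := hQpos z; positivity
  have hA0 : ∀ q, 0 ≤ Af q := fun q => le_max_right _ _
  have hB0 : ∀ q, 0 ≤ B q := fun q => le_min (hpos q) (by have := hQ0 q.2; positivity)
  have hABP : ∀ q, Af q + B q = PXZ q := by
    intro q
    simp only [hAdef, hBdef]
    rcases le_total (PXZ q) (γ * ((Fintype.card X : ℝ)⁻¹ * QZ q.2)) with h | h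
    · rw [max_eq_right (sub_nonpos.mpr h), min_eq_left h]; ring
    · rw [max_eq_left (sub_nonneg.mpr h), min_eq_right h]; ring
  have hBsq : ∀ q : X × Z, (B q)^2 = γ * ((Fintype.card X : ℝ)⁻¹ * QZ q.2) *
      (PXZ q * Real.exp (-|Real.log (PXZ q / ((Fintype.card X : ℝ)⁻¹ * QZ q.2))
        - Real.log γ|)) :=
    fun q => min_sq_eq _ _ _ (hpos q) (hQ0 q.2) hγ
  have hVnn : 0 ≤ V := by
    rw [hVdef]
    exact Finset.sum_nonneg fun q _ => mul_nonneg (hpos q) (Real.exp_nonneg _)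
  -- expectation over random hash functions
  have havg : ∑ g : X → K, ∑ z : Z, (m / QZ z) *
        ∑ k : K, ((∑ x ∈ univ.filter (fun x => g x = k), B (x, z))
          - m⁻¹ * ∑ x, B (x, z)) ^ 2
      ≤ N * ((γ / L) * V) := by
    rw [Finset.sum_comm]
    have step1 : ∀ z : Z, ∑ g : X → K, (m / QZ z) *
          ∑ k : K, ((∑ x ∈ univ.filter (fun x => g x = k), B (x, z))
            - m⁻¹ * ∑ x, B (x, z)) ^ 2
        ≤ (m / QZ z) * (N * ∑ x, (B (x, z))^2) := by
      intro z
      rw [← Finset.mul_sum]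
      exact mul_le_mul_of_nonneg_left (var_bound (fun x => B (x, z)))
        (div_nonneg hm.le (hQpos z).le)
    have step2 : ∀ z : Z, (m / QZ z) * (N * ∑ x, (B (x, z))^2)
        = N * ∑ x, (γ / L) * (PXZ (x, z) *
            Real.exp (-|Real.log (PXZ (x, z) / ((Fintype.card X : ℝ)⁻¹ * QZ z))
              - Real.log γ|)) := by
      intro z
      have hcoef : m / QZ z * (γ * ((Fintype.card X : ℝ)⁻¹ * QZ z)) = γ / L := by
        rw [hL, hmdef]
        have := (hQpos z).ne'
        field_simp
      have : ∑ x, (B (x, z))^2 = γ * ((Fintype.card X : ℝ)⁻¹ * QZ z) *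
          ∑ x, (PXZ (x, z) *
            Real.exp (-|Real.log (PXZ (x, z) / ((Fintype.card X : ℝ)⁻¹ * QZ z))
              - Real.log γ|)) := by
        rw [Finset.mul_sum]
        exact Finset.sum_congr rfl fun x _ => hBsq (x, z)
      have hrhs : ∑ x, (γ / L) * (PXZ (x, z) *
          Real.exp (-|Real.log (PXZ (x, z) / ((Fintype.card X : ℝ)⁻¹ * QZ z))
            - Real.log γ|))
          = (γ / L) * ∑ x, (PXZ (x, z) *
          Real.exp (-|Real.log (PXZ (x, z) / ((Fintype.card X : ℝ)⁻¹ * QZ z))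
            - Real.log γ|)) := (Finset.mul_sum _ _ _).symm
      rw [this, hrhs, ← hcoef]
      ring
    calc ∑ z : Z, ∑ g : X → K, (m / QZ z) *
          ∑ k : K, ((∑ x ∈ univ.filter (fun x => g x = k), B (x, z))
            - m⁻¹ * ∑ x, B (x, z)) ^ 2
        ≤ ∑ z : Z, (m / QZ z) * (N * ∑ x, (B (x, z))^2) :=
          Finset.sum_le_sum fun z _ => step1 z
      _ = ∑ z : Z, N * ∑ x, (γ / L) * (PXZ (x, z) *
            Real.exp (-|Real.log (PXZ (x, z) / ((Fintype.card X : ℝ)⁻¹ * QZ z))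
              - Real.log γ|)) := Finset.sum_congr rfl fun z _ => step2 z
      _ = N * ((γ / L) * V) := by
          rw [← Finset.mul_sum]
          congr 1
          rw [hVdef, Fintype.sum_prod_type, Finset.sum_comm, Finset.mul_sum]
          refine Finset.sum_congr rfl fun z _ => ?_
          rw [Finset.mul_sum]
  -- choose a good hash function
  obtain ⟨g, hg⟩ : ∃ g : X → K, ∑ z : Z, (m / QZ z) *
      ∑ k : K, ((∑ x ∈ univ.filter (fun x => g x = k), B (x, z))
        - m⁻¹ * ∑ x, B (x, z)) ^ 2 ≤ (γ / L) * V := by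
    by_contra hcon
    push_neg at hcon
    have hlt := Finset.sum_lt_sum_of_nonempty (univ_nonempty (α := X → K))
      (fun g _ => hcon g)
    rw [Finset.sum_const, Finset.card_univ, nsmul_eq_mul, ← hNdef] at hlt
    linarith
  refine ⟨g, ?_⟩
  -- notation
  set D : K × Z → ℝ := fun p => (∑ x ∈ univ.filter (fun x => g x = p.1), B (x, p.2))
      - m⁻¹ * ∑ x, B (x, p.2) with hDdef
  set W : ℝ := ∑ z : Z, (m / QZ z) *
      ∑ k : K, ((∑ x ∈ univ.filter (fun x => g x = k), B (x, z))
        - m⁻¹ * ∑ x, B (x, z)) ^ 2 with hWdef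
  have hWnn : 0 ≤ W := by
    rw [hWdef]
    refine Finset.sum_nonneg fun z _ => mul_nonneg (div_nonneg hm.le (hQpos z).le)
      (Finset.sum_nonneg fun k _ => sq_nonneg _)
  -- pointwise bound on |F - T|
  have hpt : ∀ p : K × Z,
      |(∑ x ∈ univ.filter (fun x => g x = p.1), PXZ (x, p.2))
        - m⁻¹ * ∑ x, PXZ (x, p.2)|
      ≤ ((∑ x ∈ univ.filter (fun x => g x = p.1), Af (x, p.2))
          + m⁻¹ * ∑ x, Af (x, p.2)) + |D p| := by
    intro p
    have hF : (∑ x ∈ univ.filter (fun x => g x = p.1), PXZ (x, p.2))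
        = (∑ x ∈ univ.filter (fun x => g x = p.1), Af (x, p.2))
          + ∑ x ∈ univ.filter (fun x => g x = p.1), B (x, p.2) := by
      rw [← Finset.sum_add_distrib]
      exact Finset.sum_congr rfl fun x _ => (hABP (x, p.2)).symm
    have hT : ∑ x, PXZ (x, p.2) = (∑ x, Af (x, p.2)) + ∑ x, B (x, p.2) := by
      rw [← Finset.sum_add_distrib]
      exact Finset.sum_congr rfl fun x _ => (hABP (x, p.2)).symm
    have heq : (∑ x ∈ univ.filter (fun x => g x = p.1), PXZ (x, p.2))
        - m⁻¹ * ∑ x, PXZ (x, p.2)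
        = ((∑ x ∈ univ.filter (fun x => g x = p.1), Af (x, p.2))
            - m⁻¹ * ∑ x, Af (x, p.2)) + D p := by
      rw [hF, hT, hDdef]; ring
    rw [heq]
    refine (abs_add_le _ _).trans ?_
    gcongr
    calc |(∑ x ∈ univ.filter (fun x => g x = p.1), Af (x, p.2))
          - m⁻¹ * ∑ x, Af (x, p.2)|
        ≤ |∑ x ∈ univ.filter (fun x => g x = p.1), Af (x, p.2)|
          + |m⁻¹ * ∑ x, Af (x, p.2)| := abs_sub _ _
      _ = (∑ x ∈ univ.filter (fun x => g x = p.1), Af (x, p.2))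
          + m⁻¹ * ∑ x, Af (x, p.2) := by
          rw [abs_of_nonneg (Finset.sum_nonneg fun x _ => hA0 _),
            abs_of_nonneg (mul_nonneg (inv_nonneg.mpr hm.le)
              (Finset.sum_nonneg fun x _ => hA0 _))]
  -- sum of the A-part
  have hApart : ∑ p : K × Z, ((∑ x ∈ univ.filter (fun x => g x = p.1), Af (x, p.2))
        + m⁻¹ * ∑ x, Af (x, p.2)) = 2 * ∑ q : X × Z, Af q := by
    have hAq : ∑ q : X × Z, Af q = ∑ z : Z, ∑ x, Af (x, z) := by
      rw [Fintype.sum_prod_type, Finset.sum_comm]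
    rw [Finset.sum_add_distrib]
    have e1 : ∑ p : K × Z, (∑ x ∈ univ.filter (fun x => g x = p.1), Af (x, p.2))
        = ∑ q : X × Z, Af q := by
      rw [Fintype.sum_prod_type]
      dsimp only
      rw [Finset.sum_comm, hAq]
      exact Finset.sum_congr rfl fun z _ => Finset.sum_fiberwise _ _ _
    have e2 : ∑ p : K × Z, (m⁻¹ * ∑ x, Af (x, p.2)) = ∑ q : X × Z, Af q := by
      have hk : ∀ k : K, ∑ z : Z, m⁻¹ * ∑ x, Af (x, z) = m⁻¹ * ∑ q : X × Z, Af q := by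
        intro k
        rw [← Finset.mul_sum, ← hAq]
      rw [Fintype.sum_prod_type]
      dsimp only
      rw [Finset.sum_congr rfl fun k _ => hk k, Finset.sum_const, Finset.card_univ,
        nsmul_eq_mul, ← hmdef, ← mul_assoc, mul_inv_cancel₀ hm.ne', one_mul]
    rw [e1, e2]; ring
  -- Cauchy-Schwarz for the B-part
  have hDsum : ∑ p : K × Z, |D p| ≤ Real.sqrt ((γ / L) * V) := by
    have hcs := Finset.sum_mul_sq_le_sq_mul_sq univ
      (fun p : K × Z => Real.sqrt (QZ p.2 / m))
      (fun p : K × Z => |D p| * Real.sqrt (m / QZ p.2))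
    have hfg : ∀ p : K × Z,
        Real.sqrt (QZ p.2 / m) * (|D p| * Real.sqrt (m / QZ p.2)) = |D p| := by
      intro p
      have h1 : (0:ℝ) < QZ p.2 / m := div_pos (hQpos p.2) hm
      have hins : Real.sqrt (QZ p.2 / m) * Real.sqrt (m / QZ p.2) = 1 := by
        rw [← Real.sqrt_mul h1.le]
        rw [show QZ p.2 / m * (m / QZ p.2) = 1 by
          field_simp [hm.ne', (hQpos p.2).ne']]
        exact Real.sqrt_one
      calc Real.sqrt (QZ p.2 / m) * (|D p| * Real.sqrt (m / QZ p.2))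
          = |D p| * (Real.sqrt (QZ p.2 / m) * Real.sqrt (m / QZ p.2)) := by ring
        _ = |D p| := by rw [hins, mul_one]
    have hsumf : ∑ p : K × Z, (Real.sqrt (QZ p.2 / m))^2 = 1 := by
      have h : ∀ p : K × Z, (Real.sqrt (QZ p.2 / m))^2 = QZ p.2 / m :=
        fun p => Real.sq_sqrt (div_pos (hQpos p.2) hm).le
      rw [Finset.sum_congr rfl fun p _ => h p, Fintype.sum_prod_type]
      have hz : ∀ k : K, ∑ z : Z, QZ z / m = m⁻¹ := by
        intro k
        rw [← Finset.sum_div, hQsum]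
        exact one_div m
      rw [Finset.sum_congr rfl fun k _ => hz k, Finset.sum_const, Finset.card_univ,
        nsmul_eq_mul, ← hmdef, mul_inv_cancel₀ hm.ne']
    have hsumg : ∑ p : K × Z, (|D p| * Real.sqrt (m / QZ p.2))^2 = W := by
      have h : ∀ p : K × Z, (|D p| * Real.sqrt (m / QZ p.2))^2
          = (m / QZ p.2) * (D p)^2 := by
        intro p
        rw [mul_pow, sq_abs, Real.sq_sqrt (div_nonneg hm.le (hQpos p.2).le)]
        ring
      rw [Finset.sum_congr rfl fun p _ => h p, Fintype.sum_prod_type, Finset.sum_comm,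
        hWdef]
      refine Finset.sum_congr rfl fun z _ => ?_
      rw [Finset.mul_sum]
    have hDnn : 0 ≤ ∑ p : K × Z, |D p| := Finset.sum_nonneg fun p _ => abs_nonneg _
    have hsq : (∑ p : K × Z, |D p|)^2 ≤ (γ / L) * V := by
      calc (∑ p : K × Z, |D p|)^2
          = (∑ p : K × Z, Real.sqrt (QZ p.2 / m) * (|D p| * Real.sqrt (m / QZ p.2)))^2 := by
            rw [Finset.sum_congr rfl fun p _ => hfg p]
        _ ≤ (∑ p : K × Z, (Real.sqrt (QZ p.2 / m))^2) *
              ∑ p : K × Z, (|D p| * Real.sqrt (m / QZ p.2))^2 := hcs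
        _ = W := by rw [hsumf, hsumg, one_mul]
        _ ≤ (γ / L) * V := hg
    calc ∑ p : K × Z, |D p| = Real.sqrt ((∑ p : K × Z, |D p|)^2) :=
          (Real.sqrt_sq hDnn).symm
      _ ≤ Real.sqrt ((γ / L) * V) := Real.sqrt_le_sqrt hsq
  -- assemble
  have hEg : Egamma γ PXZ (fun q : X × Z => (Fintype.card X : ℝ)⁻¹ * QZ q.2)
      = ∑ q : X × Z, Af q := by
    rw [Egamma, hAdef]
  rw [tv, hEg]
  have hstep : ∑ p : K × Z,
      |(∑ x ∈ univ.filter (fun x => g x = p.1), PXZ (x, p.2))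
        - m⁻¹ * ∑ x, PXZ (x, p.2)|
      ≤ 2 * (∑ q : X × Z, Af q) + Real.sqrt ((γ / L) * V) := by
    calc ∑ p : K × Z, |(∑ x ∈ univ.filter (fun x => g x = p.1), PXZ (x, p.2))
          - m⁻¹ * ∑ x, PXZ (x, p.2)|
        ≤ ∑ p : K × Z, (((∑ x ∈ univ.filter (fun x => g x = p.1), Af (x, p.2))
            + m⁻¹ * ∑ x, Af (x, p.2)) + |D p|) :=
          Finset.sum_le_sum fun p _ => hpt p
      _ = 2 * (∑ q : X × Z, Af q) + ∑ p : K × Z, |D p| := by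
          rw [Finset.sum_add_distrib, hApart]
      _ ≤ 2 * (∑ q : X × Z, Af q) + Real.sqrt ((γ / L) * V) := by linarith [hDsum]
  linarith [hstep]
end
end

section
/- Let X, K, Z be finite sets such that L := |X|/|K| is a positive integer, and let P_{XZ} be a probability distribution on X × Z whose X-marginal is the uniform distribution Q_X^unif. Then for every γ > 0 and every probability distribution Q_Z on Z with Q_Z(z) > 0 for all z, there exists a function g : X → K such that |g⁻¹(k)| = L for every k ∈ K (so that g(X) is uniformly distributed on K) and S(g(X)|Z) ≤ E_γ(P_{XZ}, Q_X^unif × Q_Z) + (1/2)·√( (γ/L)·E_{(X,Z)~P_{XZ}}[ exp(−|ı(X;Z) − log γ|) ] ). -/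
/-!
Split `P_{XZ} = A + D` with `A = min P_{XZ} (γ • Q)` and `D = max (P_{XZ} - γ • Q) 0`, where
`Q = Q_X^unif × Q_Z`, so that `∑ D = E_γ(P_{XZ}, Q)`; whatever the hash, `D` contributes at most
`2 E_γ` to the L¹ deviation. For `A`, identify `X` with `K × Fin L`, make `K` a group and hash
with the shifts `(k, j) ↦ k + s j`, `s : Fin L → K`. These are balanced and universal: distinct
inputs collide for at most a `1/|K|` fraction of the seeds, so on average over `s` the sum over
`k` of the squared deviations of the hashed `A(·, z)` from its mean is at most `∑ₓ A(x, z)²`. Cauchy–Schwarz with the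
weights `Q_Z(z)/|K|` turns this into an L¹ bound for some seed, and
`min a b ^ 2 = a * b * exp (-|log (a / b)|)` identifies `|K| ∑ A² / Q_Z` with
`(γ / L) E[exp (-|ı(X;Z) - log γ|)]`.
-/

open Finset

noncomputable section

open Fintype Function Real

theorem sq_min_eq_mul_mul_exp_neg_abs_log_div {a b : ℝ} (ha : 0 ≤ a) (hb : 0 < b) :
    min a b ^ 2 = a * b * exp (-|log (a / b)|) := by
  rcases ha.eq_or_lt with rfl | ha
  · simp [hb.le]
  rcases le_total a b with hab | hab
  · rw [min_eq_left hab, abs_of_nonpos (log_nonpos (by positivity) ((div_le_one hb).2 hab)),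
      neg_neg, exp_log (by positivity)]
    field_simp
  · rw [min_eq_right hab, abs_of_nonneg (log_nonneg ((le_div_iff₀ hb).2 (by linarith))),
      ← log_inv, exp_log (by positivity), inv_div]
    field_simp

theorem sq_min_mul_eq_mul_exp_neg_abs_log_sub {p q γ : ℝ} (hp : 0 ≤ p) (hq : 0 < q) (hγ : 0 < γ) :
    min p (γ * q) ^ 2 = γ * p * q * exp (-|log (p / q) - log γ|) := by
  rcases hp.eq_or_lt with rfl | hp
  · simp [(mul_pos hγ hq).le]
  rw [sq_min_eq_mul_mul_exp_neg_abs_log_div hp.le (by positivity),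
    log_div hp.ne' hq.ne', log_div hp.ne' (by positivity), log_mul hγ.ne' hq.ne']
  ring_nf

theorem sum_abs_le_sqrt_sum_sq_div {ι : Type*} (s : Finset ι) (u : ι → ℝ) {w : ι → ℝ}
    (hw : ∀ i ∈ s, 0 < w i) (hw1 : ∑ i ∈ s, w i = 1) :
    ∑ i ∈ s, |u i| ≤ √(∑ i ∈ s, u i ^ 2 / w i) := by
  have h := sq_sum_div_le_sum_sq_div s (fun i => |u i|) hw
  simp only [hw1, div_one, sq_abs] at h
  exact (le_abs_self _).trans (abs_le_sqrt h)

theorem AddMonoidHom.card_fiber_mul_card_of_surjective {A B : Type*} [AddGroup A] [Fintype A]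
    [AddGroup B] [Fintype B] [DecidableEq B] (φ : A →+ B) (hφ : Surjective φ) (b : B) :
    #{a | φ a = b} * card B = card A := by
  calc #{a | φ a = b} * card B = ∑ b' : B, #{a | φ a = b'} := by
        rw [sum_congr rfl fun b' _ => AddMonoidHom.card_fiber_eq_of_mem_range φ (hφ b') (hφ b),
          sum_const, card_univ, smul_eq_mul, mul_comm]
    _ = card A := (card_eq_sum_card_fiberwise (f := φ) (s := univ) (t := univ) (by simp)).symm

section Pushforward

variable {X K : Type*} [Fintype X] [DecidableEq K]

def pushforward (g : X → K) (f : X → ℝ) (k : K) : ℝ := ∑ x ∈ univ.filter (fun x => g x = k), f x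

variable [Fintype K]

theorem sum_pushforward (g : X → K) (f : X → ℝ) : ∑ k, pushforward g f k = ∑ x, f x :=
  sum_fiberwise univ g f

theorem sum_pushforward_sq (g : X → K) (f : X → ℝ) :
    ∑ k, pushforward g f k ^ 2 = ∑ x, ∑ x', if g x' = g x then f x * f x' else 0 := by
  calc ∑ k, pushforward g f k ^ 2
      = ∑ k, ∑ x ∈ univ.filter (fun x => g x = k), f x * pushforward g f (g x) := by
        refine sum_congr rfl fun k _ => ?_
        rw [sq, pushforward, sum_mul]
        exact sum_congr rfl fun x hx => by rw [(mem_filter.1 hx).2]; rfl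
    _ = ∑ x, f x * pushforward g f (g x) := sum_fiberwise univ g _
    _ = _ := by simp only [pushforward, mul_sum, sum_filter, mul_ite, mul_zero]

theorem sum_sq_pushforward_sub_mean (g : X → K) (f : X → ℝ) :
    ∑ k, (pushforward g f k - (card K : ℝ)⁻¹ * ∑ x, f x) ^ 2
      = ∑ k, pushforward g f k ^ 2 - (card K : ℝ)⁻¹ * (∑ x, f x) ^ 2 := by
  simp only [sub_sq, sum_add_distrib, sum_sub_distrib, ← sum_mul, ← mul_sum, sum_pushforward,
    sum_const, card_univ, nsmul_eq_mul]
  rcases eq_or_ne (card K : ℝ) 0 with h | h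
  · simp [h]
  · field_simp
    ring

theorem sum_abs_pushforward_add_sub_mean_le [Nonempty K] (g : X → K) (a d : X → ℝ) (hd : 0 ≤ d) :
    ∑ k, |pushforward g (a + d) k - (card K : ℝ)⁻¹ * ∑ x, (a + d) x|
      ≤ ∑ k, |pushforward g a k - (card K : ℝ)⁻¹ * ∑ x, a x| + 2 * ∑ x, d x := by
  have hd' : ∀ k, |pushforward g d k - (card K : ℝ)⁻¹ * ∑ x, d x|
      ≤ pushforward g d k + (card K : ℝ)⁻¹ * ∑ x, d x := fun k =>
    abs_sub _ _ |>.trans (by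
      rw [abs_of_nonneg (show 0 ≤ pushforward g d k from sum_nonneg fun x _ => hd x),
        abs_of_nonneg (mul_nonneg (by positivity) (sum_nonneg fun x _ => hd x))])
  calc ∑ k, |pushforward g (a + d) k - (card K : ℝ)⁻¹ * ∑ x, (a + d) x|
      ≤ ∑ k, (|pushforward g a k - (card K : ℝ)⁻¹ * ∑ x, a x|
          + (pushforward g d k + (card K : ℝ)⁻¹ * ∑ x, d x)) := by
        refine sum_le_sum fun k _ => ?_
        have : pushforward g (a + d) k - (card K : ℝ)⁻¹ * ∑ x, (a + d) x
            = (pushforward g a k - (card K : ℝ)⁻¹ * ∑ x, a x)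
              + (pushforward g d k - (card K : ℝ)⁻¹ * ∑ x, d x) := by
          simp only [pushforward, Pi.add_apply, sum_add_distrib]
          ring
        rw [this]
        exact (abs_add_le _ _).trans (by gcongr; exact hd' k)
    _ = _ := by
        rw [sum_add_distrib, sum_add_distrib, sum_pushforward, sum_const, card_univ, nsmul_eq_mul,
          ← mul_assoc, mul_inv_cancel₀ (by positivity), one_mul, two_mul]

end Pushforward

def IsUniversalHashFamily {S X K : Type*} [Fintype S] [Fintype K] [DecidableEq K]
    (g : S → X → K) : Prop :=
  ∀ x x', x ≠ x' → #{s | g s x = g s x'} * card K ≤ card S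

namespace IsUniversalHashFamily

variable {S X K : Type*} [Fintype S] [Fintype K] [DecidableEq K] {g : S → X → K}

theorem comp {Y : Type*} (hg : IsUniversalHashFamily g) {e : Y → X} (he : Injective e) :
    IsUniversalHashFamily (fun s y => g s (e y)) :=
  fun _ _ hne => hg _ _ (he.ne hne)

theorem card_collision_le [DecidableEq X] [Nonempty K] (hg : IsUniversalHashFamily g) (x x' : X) :
    (#{s | g s x = g s x'} : ℝ) ≤ card S * ((if x = x' then 1 else 0) + (card K : ℝ)⁻¹) := by
  have hK : (0 : ℝ) < card K := by exact_mod_cast Fintype.card_pos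
  split_ifs with h
  · have : (#{s | g s x = g s x'} : ℝ) ≤ card S := by exact_mod_cast card_filter_le _ _
    nlinarith [inv_pos.2 hK, (card S).cast_nonneg (α := ℝ)]
  · rw [zero_add, ← div_eq_mul_inv, le_div_iff₀ hK]
    exact_mod_cast hg x x' h

variable [Fintype X] [DecidableEq X]

theorem sum_sum_sq_pushforward_sub_mean_le [Nonempty K] (hg : IsUniversalHashFamily g)
    {f : X → ℝ} (hf : 0 ≤ f) :
    ∑ s, ∑ k, (pushforward (g s) f k - (card K : ℝ)⁻¹ * ∑ x, f x) ^ 2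
      ≤ card S * ∑ x, f x ^ 2 := by
  simp only [sum_sq_pushforward_sub_mean, sum_pushforward_sq, sum_sub_distrib, sum_const,
    card_univ, nsmul_eq_mul]
  have hcoll : ∑ s, ∑ x, ∑ x', (if g s x' = g s x then f x * f x' else 0)
      ≤ card S * (∑ x, f x ^ 2 + (card K : ℝ)⁻¹ * (∑ x, f x) ^ 2) := by
    calc ∑ s, ∑ x, ∑ x', (if g s x' = g s x then f x * f x' else 0)
        = ∑ x, ∑ x', f x * f x' * #{s | g s x' = g s x} := by
          rw [sum_comm]
          refine sum_congr rfl fun x _ => ?_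
          rw [sum_comm]
          simp [sum_ite, mul_comm]
      _ ≤ ∑ x, ∑ x', f x * f x' * (card S * ((if x' = x then 1 else 0) + (card K : ℝ)⁻¹)) := by
          gcongr with x _ x' _
          · exact mul_nonneg (hf x) (hf x')
          · exact hg.card_collision_le x' x
      _ = card S * (∑ x, f x ^ 2 + (card K : ℝ)⁻¹ * (∑ x, f x) ^ 2) := by
          simp only [mul_add, sum_add_distrib, mul_ite, mul_one, mul_zero, Finset.sum_ite_eq',
            mem_univ, if_true]
          rw [sq (∑ x, f x), Finset.sum_mul_sum]
          simp only [mul_sum]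
          congr 1 <;> refine sum_congr rfl fun x _ => ?_
          · ring
          · exact sum_congr rfl fun x' _ => by ring
  linarith

theorem exists_sum_abs_pushforward_sub_mean_le [Nonempty S] [Nonempty K]
    (hg : IsUniversalHashFamily g) {Z : Type*} [Fintype Z] {a : X × Z → ℝ} (ha : 0 ≤ a)
    {w : Z → ℝ} (hw : ∀ z, 0 < w z) (hw1 : ∑ z, w z = 1) :
    ∃ s, ∑ q : K × Z, |pushforward (g s) (fun x => a (x, q.2)) q.1
        - (card K : ℝ)⁻¹ * ∑ x, a (x, q.2)|
      ≤ √(∑ q : X × Z, card K * a q ^ 2 / w q.2) := by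
  have hK : (0 : ℝ) < card K := by exact_mod_cast Fintype.card_pos
  set u : S → K × Z → ℝ := fun s q =>
    pushforward (g s) (fun x => a (x, q.2)) q.1 - (card K : ℝ)⁻¹ * ∑ x, a (x, q.2) with hu
  have hweights : ∑ q : K × Z, w q.2 / card K = 1 := by
    rw [Fintype.sum_prod_type]
    simp only [← sum_div, hw1, sum_const, card_univ, nsmul_eq_mul]
    field_simp
  have hmean : ∑ s, ∑ q : K × Z, u s q ^ 2 / (w q.2 / card K)
      ≤ ∑ _s : S, ∑ q : X × Z, card K * a q ^ 2 / w q.2 := by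
    calc ∑ s, ∑ q : K × Z, u s q ^ 2 / (w q.2 / card K)
        = ∑ z, card K / w z * ∑ s, ∑ k, u s (k, z) ^ 2 := by
          simp only [Fintype.sum_prod_type_right, mul_sum]
          rw [sum_comm]
          refine sum_congr rfl fun z _ => ?_
          refine sum_congr rfl fun s _ => sum_congr rfl fun k _ => ?_
          rw [div_div_eq_mul_div]
          ring
      _ ≤ ∑ z, card K / w z * (card S * ∑ x, a (x, z) ^ 2) := by
          refine sum_le_sum fun z _ => mul_le_mul_of_nonneg_left ?_ (div_pos hK (hw z)).le
          have := hg.sum_sum_sq_pushforward_sub_mean_le (f := fun x => a (x, z)) fun x => ha (x, z)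
          simpa only [hu] using this
      _ = ∑ _s : S, ∑ q : X × Z, card K * a q ^ 2 / w q.2 := by
          simp only [sum_const, card_univ, nsmul_eq_mul, Fintype.sum_prod_type_right, mul_sum]
          exact sum_congr rfl fun z _ => sum_congr rfl fun x _ => by ring
  obtain ⟨s, -, hs⟩ := exists_le_of_sum_le univ_nonempty hmean
  refine ⟨s, (sum_abs_le_sqrt_sum_sq_div univ (u s) (fun q _ => ?_) hweights).trans ?_⟩
  · exact div_pos (hw q.2) hK
  · exact sqrt_le_sqrt hs

end IsUniversalHashFamily

theorem tv_pushforward_le_Egamma_add {X K Z : Type*} [Fintype X] [Fintype K] [DecidableEq K]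
    [Nonempty K] [Fintype Z] (g : X → K) (γ : ℝ) (P Q : X × Z → ℝ) :
    tv (fun q : K × Z => pushforward g (fun x => P (x, q.2)) q.1)
        (fun q : K × Z => (card K : ℝ)⁻¹ * ∑ x, P (x, q.2))
      ≤ Egamma γ P Q + 1 / 2 * ∑ q : K × Z,
          |pushforward g (fun x => min (P (x, q.2)) (γ * Q (x, q.2))) q.1
            - (card K : ℝ)⁻¹ * ∑ x, min (P (x, q.2)) (γ * Q (x, q.2))| := by
  have hsplit : ∀ z, (fun x => P (x, z)) = (fun x => min (P (x, z)) (γ * Q (x, z)))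
      + (fun x => max (P (x, z) - γ * Q (x, z)) 0) := fun z => funext fun x => by
    rcases le_total (P (x, z)) (γ * Q (x, z)) with h | h
    · simp [min_eq_left h, max_eq_right (sub_nonpos.2 h)]
    · simp [min_eq_right h, max_eq_left (sub_nonneg.2 h)]
  rw [tv, Egamma]
  simp only [Fintype.sum_prod_type_right]
  calc 1 / 2 * ∑ z, ∑ k, |pushforward g (fun x => P (x, z)) k - (card K : ℝ)⁻¹ * ∑ x, P (x, z)|
      ≤ 1 / 2 * ∑ z, (∑ k, |pushforward g (fun x => min (P (x, z)) (γ * Q (x, z))) k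
            - (card K : ℝ)⁻¹ * ∑ x, min (P (x, z)) (γ * Q (x, z))|
          + 2 * ∑ x, max (P (x, z) - γ * Q (x, z)) 0) := by
        gcongr with z
        rw [hsplit z]
        exact sum_abs_pushforward_add_sub_mean_le g _ _ fun x => le_max_right _ _
    _ = _ := by
        rw [sum_add_distrib, ← mul_sum]
        ring

section ShiftHash

variable {G ι : Type*} [AddCommGroup G] [Fintype G] [DecidableEq G] [Fintype ι]

def shiftHash (s : ι → G) (y : G × ι) : G := y.1 + s y.2

theorem card_filter_shiftHash_eq (s : ι → G) (k : G) : #{y | shiftHash s y = k} = card ι := by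
  rw [← card_univ]
  refine card_nbij' Prod.snd (fun j => (k - s j, j)) (fun _ _ => mem_univ _)
    (fun j _ => by rw [mem_coe, mem_filter_univ, shiftHash, sub_add_cancel]) (fun y hy => ?_)
    (fun _ _ => rfl)
  obtain rfl : y.1 + s y.2 = k := (mem_filter.1 hy).2
  simp

theorem card_filter_shiftHash_comp_eq {X : Type*} [Fintype X] (e : X ≃ G × ι) (s : ι → G)
    (k : G) : #{x | shiftHash s (e x) = k} = card ι := by
  rw [← card_filter_shiftHash_eq s k]
  exact card_equiv e (by simp)

theorem isUniversalHashFamily_shiftHash [DecidableEq ι] :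
    IsUniversalHashFamily (shiftHash : (ι → G) → G × ι → G) := by
  rintro ⟨a, i⟩ ⟨b, j⟩ hne
  by_cases hij : i = j
  · subst hij
    have hab : a ≠ b := fun h => hne (h ▸ rfl)
    simp [shiftHash, hab]
  let φ : (ι → G) →+ G := Pi.evalAddMonoidHom (fun _ => G) i - Pi.evalAddMonoidHom (fun _ => G) j
  have hφ : Surjective φ := fun c => ⟨Pi.single i c, by simp [φ, Pi.single_eq_of_ne' hij]⟩
  have hfilter : univ.filter (fun s : ι → G => shiftHash s (a, i) = shiftHash s (b, j))
      = univ.filter (fun s => φ s = b - a) := by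
    ext s
    rw [mem_filter_univ, mem_filter_univ]
    simp only [shiftHash, φ, AddMonoidHom.sub_apply,
      Pi.evalAddMonoidHom_apply, sub_eq_sub_iff_add_eq_add]
    rw [add_comm (s i)]
  rw [hfilter, AddMonoidHom.card_fiber_mul_card_of_surjective φ hφ]

end ShiftHash

theorem privacy_amplification_uniform_general
    {X K Z : Type*} [Fintype X] [Fintype K] [Fintype Z]
    [Nonempty X] [Nonempty K] [DecidableEq K]
    (L : ℕ) (hcard : Fintype.card X = L * Fintype.card K)
    (PXZ : X × Z → ℝ)
    (hpos : ∀ q, 0 ≤ PXZ q)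
    (γ : ℝ) (hγ : 0 < γ)
    (QZ : Z → ℝ) (hQpos : ∀ z, 0 < QZ z) (hQsum : ∑ z, QZ z = 1) :
    ∃ g : X → K,
      (∀ k, (univ.filter (fun x => g x = k)).card = L) ∧
      tv (fun q : K × Z => ∑ x ∈ univ.filter (fun x => g x = q.1), PXZ (x, q.2))
         (fun q : K × Z => (Fintype.card K : ℝ)⁻¹ * ∑ x, PXZ (x, q.2))
        ≤ Egamma γ PXZ (fun q : X × Z => (Fintype.card X : ℝ)⁻¹ * QZ q.2)
          + (1 / 2) * Real.sqrt ((γ / (L : ℝ)) *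
              ∑ q : X × Z, PXZ q *
                Real.exp (-|Real.log (PXZ q / ((Fintype.card X : ℝ)⁻¹ * QZ q.2))
                  - Real.log γ|)) := by
  classical
  let : AddCommGroup K := (Fintype.equivFin K).addCommGroup
  obtain ⟨e⟩ : Nonempty (X ≃ K × Fin L) := ⟨Fintype.equivOfCardEq (by simp [hcard, mul_comm])⟩
  set Q : X × Z → ℝ := fun q => (card X : ℝ)⁻¹ * QZ q.2
  have hQ : ∀ q, 0 < Q q := fun q => mul_pos (by positivity) (hQpos q.2)
  obtain ⟨s, hs⟩ :=
    (isUniversalHashFamily_shiftHash.comp e.injective).exists_sum_abs_pushforward_sub_mean_le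
      (a := fun q => min (PXZ q) (γ * Q q)) (fun q => le_min (hpos q) (mul_pos hγ (hQ q)).le)
      hQpos hQsum
  have hterm : ∀ q : X × Z, card K * min (PXZ q) (γ * Q q) ^ 2 / QZ q.2
      = γ / L * (PXZ q * exp (-|log (PXZ q / Q q) - log γ|)) := fun q => by
    rw [sq_min_mul_eq_mul_exp_neg_abs_log_sub (hpos q) (hQ q) hγ]
    have := (hQpos q.2).ne'
    simp only [Q, hcard, Nat.cast_mul]
    field_simp
  refine ⟨fun x => shiftHash s (e x),
    fun k => (card_filter_shiftHash_comp_eq e s k).trans (Fintype.card_fin L), ?_⟩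
  calc _ ≤ _ := tv_pushforward_le_Egamma_add _ γ PXZ Q
    _ ≤ Egamma γ PXZ Q + 1 / 2 * √(∑ q, card K * min (PXZ q) (γ * Q q) ^ 2 / QZ q.2) := by
      gcongr
    _ = _ := by simp only [hterm, ← mul_sum, Q]

/-- privacy amplification with uniform output: if `L = |X|/|K|` is a
positive integer and the `X`-marginal of `P_{XZ}` is uniform, then for every `γ > 0`
and every fully supported `Q_Z` there exists `g : X → K` with `|g⁻¹(k)| = L` for every
`k` (hence `g(X)` is uniform on `K`) satisfying the privacy amplification bound. -/
theorem privacy_amplification_uniform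
    {X K Z : Type*} [Fintype X] [Fintype K] [Fintype Z]
    [Nonempty X] [Nonempty K] [DecidableEq K]
    (L : ℕ) (hL : 0 < L) (hcard : Fintype.card X = L * Fintype.card K)
    (PXZ : X × Z → ℝ)
    (hpos : ∀ q, 0 ≤ PXZ q) (hsum : ∑ q, PXZ q = 1)
    (hunif : ∀ x, ∑ z, PXZ (x, z) = (Fintype.card X : ℝ)⁻¹)
    (γ : ℝ) (hγ : 0 < γ)
    (QZ : Z → ℝ) (hQpos : ∀ z, 0 < QZ z) (hQsum : ∑ z, QZ z = 1) :
    ∃ g : X → K,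
      (∀ k, (univ.filter (fun x => g x = k)).card = L) ∧
      tv (fun q : K × Z => ∑ x ∈ univ.filter (fun x => g x = q.1), PXZ (x, q.2))
         (fun q : K × Z => (Fintype.card K : ℝ)⁻¹ * ∑ x, PXZ (x, q.2))
        ≤ Egamma γ PXZ (fun q : X × Z => (Fintype.card X : ℝ)⁻¹ * QZ q.2)
          + (1 / 2) * Real.sqrt ((γ / (L : ℝ)) *
              ∑ q : X × Z, PXZ q *
                Real.exp (-|Real.log (PXZ q / ((Fintype.card X : ℝ)⁻¹ * QZ q.2))
                  - Real.log γ|)) :=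
  privacy_amplification_uniform_general L hcard PXZ hpos γ hγ QZ hQpos hQsum
end
end

section
/- Let X and K be finite sets with L := |X|/|K| a positive integer, and let Z be a finite set. Let P_X be the uniform distribution on X, P_{Z|X} a channel from X to Z, and P_Z(z) := Σ_{x∈X} P_X(x)·P_{Z|X}(z|x). Then there exists a function g : X → K with |g⁻¹(k)| = L for every k ∈ K such that max_{k∈K} d(P_{Z|g⁻¹(k)}, P_Z) ≤ μ + √( log(|K|+1) / (2L) ), where μ := E[ d(P_{Z|𝒜}, P_Z) ] with 𝒜 = (X̄₁,...,X̄_L) a tuple of i.i.d. P_X-distributed random variables and P_{Z|𝒜}(z) := (1/L)·Σ_{i=1}^{L} P_{Z|X}(z|X̄ᵢ). -/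
open Finset

noncomputable section

/-!
A uniformly random bijection `K × Fin L ≃ X` gives a balanced `g`, and each block `g⁻¹(k)` is then
a uniformly random injective `L`-tuple. The distance `f(𝒜) = d(P_{Z|𝒜}, P_Z)` is a convex function
of the empirical mean of `𝒜` that moves by at most `1/L` when one entry of `𝒜` changes. Hoeffding's
comparison of sampling without and with replacement bounds the exponential moments of `f` over
injective tuples by those over i.i.d. tuples, and McDiarmid's martingale argument bounds the latter
by `exp(λμ + λ²/(8L))`. For `λ = 4Lt` with `t = √(log(|K|+1)/(2L))` the Chernoff bound makes the
expected number of keys with `f > μ + t` at most `|K|/(|K|+1) < 1`, so some bijection has none.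
-/

open Function Real MulAction
open scoped BigOperators

theorem expect_smul_eq_expect {G α M : Type*} [Group G] [Fintype G] [MulAction G α] [Fintype α]
    [IsPretransitive G α] [AddCommMonoid M] [Module ℚ≥0 M] (f : α → M) (a : α) :
    𝔼 g : G, f (g • a) = 𝔼 b, f b := by
  have : Nonempty α := ⟨a⟩
  have hconst : ∀ b, 𝔼 g : G, f (g • b) = 𝔼 g : G, f (g • a) := by
    intro b
    obtain ⟨h, rfl⟩ := exists_smul_eq G a b
    simp_rw [smul_smul]
    exact Fintype.expect_equiv (Equiv.mulRight h) _ _ fun _ => rfl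
  calc 𝔼 g : G, f (g • a) = 𝔼 b : α, 𝔼 g : G, f (g • b) := by
        simp only [hconst, Fintype.expect_const]
    _ = 𝔼 g : G, 𝔼 b, f (g • b) := Finset.expect_comm ..
    _ = 𝔼 b, f b := by
        simp_rw [fun g : G => Fintype.expect_equiv (toPerm g) (fun b => f (g • b)) f
          fun _ => rfl, Fintype.expect_const]

open MeasureTheory ProbabilityTheory in
theorem expect_exp_mul_sub_expect_le {X : Type*} [Fintype X] [Nonempty X] (H : X → ℝ) {c : ℝ}
    (hH : ∀ x y, H x - H y ≤ c) (l : ℝ) :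
    𝔼 x, exp (l * (H x - 𝔼 y, H y)) ≤ exp ((l * c) ^ 2 / 8) := by
  let _ : MeasurableSpace X := ⊤
  have : DiscreteMeasurableSpace X := ⟨fun _ => trivial⟩
  set μ := (PMF.uniformOfFintype X).toMeasure
  have hint : ∀ g : X → ℝ, ∫ x, g x ∂μ = 𝔼 x, g x := by
    intro g
    rw [PMF.integral_eq_sum, Fintype.expect_eq_sum_div_card, Finset.sum_div]
    simp [div_eq_inv_mul]
  obtain ⟨x₀, hx₀⟩ := Finite.exists_min H
  have hsg := hasSubgaussianMGF_of_mem_Icc (μ := μ) (a := H x₀) (b := H x₀ + c)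
    Measurable.of_discrete.aemeasurable
    (ae_of_all _ fun x => ⟨hx₀ x, by linarith [hH x x₀]⟩)
  have := hsg.mgf_le l
  rw [mgf, hint, hint] at this
  refine this.trans_eq ?_
  have hc : 0 ≤ c := by simpa using hH x₀ x₀
  congr 1
  simp [abs_of_nonneg hc]
  ring

theorem expect_pi_fin_succ {X M : Type*} [Fintype X] [AddCommMonoid M] [Module ℚ≥0 M] {n : ℕ}
    (g : (Fin (n + 1) → X) → M) :
    𝔼 v, g v = 𝔼 x, 𝔼 w, g (Fin.cons x w) := by
  rw [← Finset.expect_product', ← Fintype.expect_equiv (Fin.consEquiv fun _ => X)]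
  · rfl
  · intro; rfl

theorem expect_exp_mul_sub_expect_le_of_bounded_differences {X : Type*} [Fintype X] [Nonempty X]
    {n : ℕ} (F : (Fin n → X) → ℝ) {c : ℝ} (hF : ∀ v i x, F (update v i x) ≤ F v + c) (l : ℝ) :
    𝔼 v, exp (l * (F v - 𝔼 w, F w)) ≤ exp (n * ((l * c) ^ 2 / 8)) := by
  induction n with
  | zero => simp
  | succ n ih =>
    set H : X → ℝ := fun x => 𝔼 w, F (Fin.cons x w)
    have hH : ∀ x y, H x - H y ≤ c := by
      intro x y
      rw [← Finset.expect_sub_distrib]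
      refine Finset.expect_le Finset.univ_nonempty fun w _ => ?_
      have := hF (Fin.cons y w) 0 x
      rw [Fin.update_cons_zero] at this
      linarith
    have hcond : ∀ x, 𝔼 w, exp (l * (F (Fin.cons x w) - H x)) ≤ exp (n * ((l * c) ^ 2 / 8)) :=
      fun x => ih (fun w => F (Fin.cons x w)) fun w i y => by
        simpa only [Fin.cons_update] using hF (Fin.cons x w) i.succ y
    calc 𝔼 v, exp (l * (F v - 𝔼 w, F w))
        = 𝔼 x, exp (l * (H x - 𝔼 y, H y)) * 𝔼 w, exp (l * (F (Fin.cons x w) - H x)) := by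
          simp_rw [expect_pi_fin_succ F, expect_pi_fin_succ (fun v => exp (l * (F v - _))),
            Finset.mul_expect, ← exp_add]
          congr! 3 with x _ w
          ring
      _ ≤ 𝔼 x, exp (l * (H x - 𝔼 y, H y)) * exp (n * ((l * c) ^ 2 / 8)) :=
          Finset.expect_le_expect fun x _ => by gcongr; exact hcond x
      _ ≤ exp ((l * c) ^ 2 / 8) * exp (n * ((l * c) ^ 2 / 8)) := by
          rw [← Finset.expect_mul]
          gcongr
          exact expect_exp_mul_sub_expect_le H hH l
      _ = exp ((n + 1 : ℕ) * ((l * c) ^ 2 / 8)) := by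
          rw [← exp_add]; push_cast; ring_nf

theorem exists_embedding_comp_eq {α β : Type*} [Fintype α] [Fintype β] [DecidableEq β]
    (v : α → β) (h : Fintype.card α ≤ Fintype.card β) : ∃ (u : α ↪ β) (ρ : α → α), ⇑u ∘ ρ = v := by
  obtain ⟨t, hvt, -, ht⟩ := exists_subsuperset_card_eq (subset_univ (univ.image v))
    (card_image_le.trans_eq (card_univ)) (h.trans_eq card_univ.symm)
  let e : α ≃ t := Fintype.equivOfCardEq (by simp [ht])
  refine ⟨e.toEmbedding.trans (Embedding.subtype _),
    fun a => e.symm ⟨v a, hvt (mem_image_of_mem v (mem_univ a))⟩, ?_⟩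
  funext a
  simp

section EmpiricalMean

variable {X E : Type*} [AddCommGroup E] [Module ℝ E]

def empiricalMean (q : X → E) {L : ℕ} (v : Fin L → X) : E := (L : ℝ)⁻¹ • ∑ i, q (v i)

theorem empiricalMean_apply {Z : Type*} (q : X → Z → ℝ) {L : ℕ} (v : Fin L → X) (z : Z) :
    empiricalMean q v z = (L : ℝ)⁻¹ * ∑ i, q (v i) z := by
  simp [empiricalMean, Finset.sum_apply]

theorem empiricalMean_update_sub (q : X → E) {L : ℕ} (v : Fin L → X) (i : Fin L) (x : X) :
    empiricalMean q (update v i x) - empiricalMean q v = (L : ℝ)⁻¹ • (q x - q (v i)) := by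
  simp only [empiricalMean, ← smul_sub, apply_update (fun _ => q), sum_update_of_mem (mem_univ i)]
  rw [← add_sum_erase _ _ (mem_univ i)]
  simp only [sdiff_singleton_eq_erase]
  congr 1
  abel

variable [Fintype X]

theorem expect_map_empiricalMean_le_comp {L : ℕ} [NeZero L] (q : X → E) {Φ : E → ℝ}
    (hΦ : ConvexOn ℝ Set.univ Φ) (ρ : Fin L → Fin L) :
    𝔼 u : Fin L ↪ X, Φ (empiricalMean q u) ≤ 𝔼 u : Fin L ↪ X, Φ (empiricalMean q (u ∘ ρ)) := by
  have hL : (L : ℝ) ≠ 0 := NeZero.ne _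
  have hshift : ∀ k : Fin L, 𝔼 u : Fin L ↪ X, Φ (empiricalMean q (u ∘ (· + k) ∘ ρ))
      = 𝔼 u : Fin L ↪ X, Φ (empiricalMean q (u ∘ ρ)) := fun k =>
    Fintype.expect_equiv (Equiv.embeddingCongr (Equiv.addRight k).symm (Equiv.refl X)) _ _
      fun _ => rfl
  -- Averaging over the cyclic shifts `· + k` of the positions makes the weights of `u ∘ ρ` uniform.
  have hmean : ∀ u : Fin L ↪ X,
      ∑ k, (L : ℝ)⁻¹ • empiricalMean q (u ∘ (· + k) ∘ ρ) = empiricalMean q u := by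
    intro u
    have hrow : ∀ i, ∑ k, q (u (ρ i + k)) = ∑ j, q (u j) := fun i =>
      Fintype.sum_equiv (Equiv.addLeft (ρ i)) _ _ fun _ => rfl
    simp only [empiricalMean, Function.comp_apply, ← smul_sum]
    rw [sum_comm, Fintype.sum_congr _ _ hrow, sum_const, card_univ, Fintype.card_fin,
      ← Nat.cast_smul_eq_nsmul ℝ, smul_smul, smul_smul, mul_assoc, inv_mul_cancel₀ hL, mul_one]
  calc 𝔼 u : Fin L ↪ X, Φ (empiricalMean q u)
      ≤ 𝔼 u : Fin L ↪ X, 𝔼 k : Fin L, Φ (empiricalMean q (u ∘ (· + k) ∘ ρ)) := by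
        refine expect_le_expect fun u _ => ?_
        rw [← hmean u, Fintype.expect_eq_sum_div_card, Fintype.card_fin, sum_div]
        simpa only [smul_eq_mul, inv_mul_eq_div] using
          hΦ.map_sum_le (t := univ) (w := fun _ => (L : ℝ)⁻¹)
            (p := fun k => empiricalMean q (u ∘ (· + k) ∘ ρ)) (fun _ _ => by positivity)
            (by simp [hL]) fun _ _ => Set.mem_univ _
    _ = 𝔼 u : Fin L ↪ X, Φ (empiricalMean q (u ∘ ρ)) := by
        rw [expect_comm]
        simp only [hshift, Fintype.expect_const]

variable [DecidableEq X]

theorem expect_embedding_le_expect_pi {L : ℕ} [NeZero L]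
    (hLX : L ≤ Fintype.card X) (q : X → E) {Φ : E → ℝ} (hΦ : ConvexOn ℝ Set.univ Φ) :
    𝔼 u : Fin L ↪ X, Φ (empiricalMean q u) ≤ 𝔼 v : Fin L → X, Φ (empiricalMean q v) := by
  have : IsPretransitive (Equiv.Perm X) (Fin L ↪ X) := Equiv.Perm.isMultiplyPretransitive X L
  have : Nonempty X := Fintype.card_pos_iff.mp ((NeZero.pos L).trans_le hLX)
  have hperm : ∀ v : Fin L → X,
      𝔼 u : Fin L ↪ X, Φ (empiricalMean q u) ≤ 𝔼 τ : Equiv.Perm X, Φ (empiricalMean q (τ ∘ v)) := by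
    intro v
    -- With `v = u₀ ∘ ρ`, the embedding `τ ∘ u₀` is uniform when `τ` is.
    obtain ⟨u₀, ρ, rfl⟩ := exists_embedding_comp_eq v (by simpa using hLX)
    calc 𝔼 u : Fin L ↪ X, Φ (empiricalMean q u)
        ≤ 𝔼 u : Fin L ↪ X, Φ (empiricalMean q (u ∘ ρ)) := expect_map_empiricalMean_le_comp q hΦ ρ
      _ = 𝔼 τ : Equiv.Perm X, Φ (empiricalMean q (τ ∘ u₀ ∘ ρ)) :=
        (expect_smul_eq_expect (fun u : Fin L ↪ X => Φ (empiricalMean q (u ∘ ρ))) u₀).symm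
  calc 𝔼 u : Fin L ↪ X, Φ (empiricalMean q u)
      ≤ 𝔼 v : Fin L → X, 𝔼 τ : Equiv.Perm X, Φ (empiricalMean q (τ ∘ v)) :=
        le_expect univ_nonempty fun v _ => hperm v
    _ = 𝔼 τ : Equiv.Perm X, 𝔼 v : Fin L → X, Φ (empiricalMean q (τ ∘ v)) := expect_comm ..
    _ = 𝔼 v : Fin L → X, Φ (empiricalMean q v) := by
        simp_rw [fun τ : Equiv.Perm X => Fintype.expect_equiv (Equiv.piCongrRight fun _ => τ)
          (fun v : Fin L → X => Φ (empiricalMean q (τ ∘ v))) (fun v => Φ (empiricalMean q v))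
          fun _ => rfl, Fintype.expect_const]

theorem expect_exp_embedding_le {L : ℕ} [NeZero L] (hLX : L ≤ Fintype.card X) (q : X → E)
    {Ψ : E → ℝ} (hΨ : ConvexOn ℝ Set.univ Ψ) {c : ℝ}
    (hc : ∀ (v : Fin L → X) i x, Ψ (empiricalMean q (update v i x)) ≤ Ψ (empiricalMean q v) + c)
    {l : ℝ} (hl : 0 ≤ l) :
    𝔼 u : Fin L ↪ X, exp (l * (Ψ (empiricalMean q u) - 𝔼 v : Fin L → X, Ψ (empiricalMean q v)))
      ≤ exp (L * ((l * c) ^ 2 / 8)) := by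
  have : Nonempty X := Fintype.card_pos_iff.mp ((NeZero.pos L).trans_le hLX)
  set M := 𝔼 v : Fin L → X, Ψ (empiricalMean q v)
  have hΦ : ConvexOn ℝ Set.univ fun P => exp (l * (Ψ P - M)) := by
    refine ⟨convex_univ, fun P _ P' _ a b ha hb hab => ?_⟩
    have hP := mul_le_mul_of_nonneg_left (hΨ.2 (Set.mem_univ P) (Set.mem_univ P') ha hb hab) hl
    calc exp (l * (Ψ (a • P + b • P') - M))
        ≤ exp (a * (l * (Ψ P - M)) + b * (l * (Ψ P' - M))) := by
          rw [exp_le_exp]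
          simp only [smul_eq_mul] at hP
          linear_combination hP + l * M * hab
      _ ≤ a • exp (l * (Ψ P - M)) + b • exp (l * (Ψ P' - M)) :=
          convexOn_exp.2 (Set.mem_univ _) (Set.mem_univ _) ha hb hab
  exact (expect_embedding_le_expect_pi hLX q hΦ).trans
    (expect_exp_mul_sub_expect_le_of_bounded_differences _ hc l)

end EmpiricalMean

section TotalVariation

variable {A : Type*} [Fintype A]

theorem tv_nonneg (P Q : A → ℝ) : 0 ≤ tv P Q := by
  unfold tv; positivity

theorem tv_sub_tv_le (P Q R : A → ℝ) : tv P R - tv Q R ≤ tv P Q := by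
  unfold tv
  rw [← mul_sub, ← sum_sub_distrib]
  gcongr with a
  linarith [abs_sub_le (P a) (Q a) (R a)]

theorem tv_le_one {P Q : A → ℝ} (hP : ∀ a, 0 ≤ P a) (hQ : ∀ a, 0 ≤ Q a) (hP1 : ∑ a, P a = 1)
    (hQ1 : ∑ a, Q a = 1) : tv P Q ≤ 1 := by
  unfold tv
  have : ∑ a, |P a - Q a| ≤ ∑ a, (P a + Q a) :=
    sum_le_sum fun a _ =>
      (abs_sub _ _).trans_eq (by rw [abs_of_nonneg (hP a), abs_of_nonneg (hQ a)])
  rw [sum_add_distrib, hP1, hQ1] at this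
  linarith

theorem tv_eq_abs_mul_tv {P Q p p' : A → ℝ} {a : ℝ} (h : P - Q = a • (p - p')) :
    tv P Q = |a| * tv p p' := by
  unfold tv
  simp_rw [← Pi.sub_apply P, h, Pi.smul_apply, Pi.sub_apply, smul_eq_mul, abs_mul, ← mul_sum]
  ring

theorem convexOn_tv (Q : A → ℝ) : ConvexOn ℝ Set.univ fun P => tv P Q := by
  refine ⟨convex_univ, fun P _ P' _ a b ha hb hab => ?_⟩
  have hpt : ∀ z, |a * P z + b * P' z - Q z| ≤ a * |P z - Q z| + b * |P' z - Q z| := fun z =>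
    calc |a * P z + b * P' z - Q z| = |a * (P z - Q z) + b * (P' z - Q z)| := by
          congr 1; linear_combination Q z * hab
      _ ≤ a * |P z - Q z| + b * |P' z - Q z| := by
          refine (abs_add_le _ _).trans_eq ?_
          rw [abs_mul, abs_mul, abs_of_nonneg ha, abs_of_nonneg hb]
  unfold tv
  simp only [smul_eq_mul, Pi.add_apply, Pi.smul_apply]
  calc 1 / 2 * ∑ z, |a * P z + b * P' z - Q z|
      ≤ 1 / 2 * ∑ z, (a * |P z - Q z| + b * |P' z - Q z|) := by gcongr with z; exact hpt z
    _ = a * (1 / 2 * ∑ z, |P z - Q z|) + b * (1 / 2 * ∑ z, |P' z - Q z|) := by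
        rw [sum_add_distrib, ← mul_sum, ← mul_sum]; ring

end TotalVariation

theorem tv_empiricalMean_update_le {X Z : Type*} [Fintype Z] {q : X → Z → ℝ}
    (hq : ∀ x z, 0 ≤ q x z) (hq1 : ∀ x, ∑ z, q x z = 1) (Q : Z → ℝ) {L : ℕ} (v : Fin L → X)
    (i : Fin L) (x : X) :
    tv (empiricalMean q (update v i x)) Q ≤ tv (empiricalMean q v) Q + (L : ℝ)⁻¹ := by
  have hstep : tv (empiricalMean q (update v i x)) (empiricalMean q v) ≤ (L : ℝ)⁻¹ := by
    rw [tv_eq_abs_mul_tv (empiricalMean_update_sub q v i x), abs_of_nonneg (by positivity)]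
    exact mul_le_of_le_one_right (by positivity)
      (tv_le_one (hq x) (hq (v i)) (hq1 x) (hq1 (v i)))
  linarith [tv_sub_tv_le (empiricalMean q (update v i x)) (empiricalMean q v) Q]

theorem expect_exp_tv_embedding_le {X Z : Type*} [Fintype X] [DecidableEq X] [Fintype Z] {L : ℕ}
    [NeZero L] (hLX : L ≤ Fintype.card X) {q : X → Z → ℝ} (hq : ∀ x z, 0 ≤ q x z)
    (hq1 : ∀ x, ∑ z, q x z = 1) (Q : Z → ℝ) {t : ℝ} (ht : 0 ≤ t) :
    𝔼 u : Fin L ↪ X, exp (4 * L * t *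
        (tv (empiricalMean q u) Q - (𝔼 v : Fin L → X, tv (empiricalMean q v) Q + t)))
      ≤ exp (-(2 * L * t ^ 2)) := by
  set μ := 𝔼 v : Fin L → X, tv (empiricalMean q v) Q
  have hconc := expect_exp_embedding_le hLX q (convexOn_tv Q) (tv_empiricalMean_update_le hq hq1 Q)
    (by positivity : 0 ≤ 4 * (L : ℝ) * t)
  calc 𝔼 u : Fin L ↪ X, exp (4 * L * t * (tv (empiricalMean q u) Q - (μ + t)))
      = exp (-(4 * L * t * t)) *
          𝔼 u : Fin L ↪ X, exp (4 * L * t * (tv (empiricalMean q u) Q - μ)) := by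
        rw [mul_expect]
        refine expect_congr rfl fun u _ => ?_
        rw [← exp_add]
        ring_nf
    _ ≤ exp (-(4 * L * t * t)) * exp (L * ((4 * L * t * (L : ℝ)⁻¹) ^ 2 / 8)) := by gcongr
    _ = exp (-(2 * L * t ^ 2)) := by
        rw [← exp_add]
        congr 1
        field_simp
        ring

theorem exists_equiv_forall_lt_one {K ι X : Type*} [Fintype K] [Fintype ι]
    [Fintype X] [DecidableEq X] (e₀ : K × ι ≃ X) (W : (ι ↪ X) → ℝ) (hW : ∀ u, 0 ≤ W u)
    (h : Fintype.card K * 𝔼 u, W u < 1) :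
    ∃ σ : K × ι ≃ X, ∀ k, W ((Embedding.sectR k ι).trans σ.toEmbedding) < 1 := by
  have : IsPretransitive (Equiv.Perm X) (ι ↪ X) := ⟨Equiv.Perm.exists_smul_eq_embedding⟩
  have hexp : 𝔼 τ : Equiv.Perm X, ∑ k, W (τ • (Embedding.sectR k ι).trans e₀.toEmbedding) < 1 := by
    rw [expect_sum_comm]
    simpa only [expect_smul_eq_expect, sum_const, card_univ, nsmul_eq_mul] using h
  obtain ⟨τ, -, hτ⟩ := exists_lt_of_expect_lt univ_nonempty hexp
  exact ⟨e₀.trans τ, fun k =>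
    (single_le_sum (f := fun k => W (τ • (Embedding.sectR k ι).trans e₀.toEmbedding))
      (fun k _ => hW _) (mem_univ k)).trans_lt hτ⟩

theorem sum_filter_fst_symm_eq {K ι X M : Type*} [Fintype K] [Fintype ι] [Fintype X]
    [DecidableEq K] [AddCommMonoid M] (σ : K × ι ≃ X) (h : X → M) (k : K) :
    ∑ x ∈ univ.filter (fun x => (σ.symm x).1 = k), h x = ∑ i, h (σ (k, i)) := by
  rw [sum_filter, ← Equiv.sum_comp σ, Fintype.sum_prod_type]
  simp

theorem strong_privacy_amplification_exists_general
    {X K Z : Type*} [Fintype X] [Fintype K] [Fintype Z]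
    [DecidableEq X] [DecidableEq K]
    (L : ℕ) (hL : 0 < L) (hcard : Fintype.card X = L * Fintype.card K)
    (PZX : X → Z → ℝ)
    (hpos : ∀ x z, 0 ≤ PZX x z) (hsum : ∀ x, ∑ z, PZX x z = 1)
    (PZ : Z → ℝ)
    (μ : ℝ)
    (hμ : μ = ((Fintype.card X : ℝ) ^ L)⁻¹ *
        ∑ v : Fin L → X, tv (fun z => (L : ℝ)⁻¹ * ∑ i, PZX (v i) z) PZ) :
    ∃ g : X → K,
      (∀ k, (univ.filter (fun x => g x = k)).card = L) ∧
      (⨆ k, tv (fun z =>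
          (L : ℝ)⁻¹ * ∑ x ∈ univ.filter (fun x => g x = k), PZX x z) PZ)
        ≤ μ + Real.sqrt (Real.log ((Fintype.card K : ℝ) + 1) / (2 * L)) := by
  have : NeZero L := ⟨hL.ne'⟩
  set m : ℝ := (Fintype.card K : ℝ)
  set t := √(log (m + 1) / (2 * L))
  have ht : 0 ≤ t := sqrt_nonneg _
  simp only [← empiricalMean_apply] at hμ
  have hμ' : μ = 𝔼 v : Fin L → X, tv (empiricalMean PZX v) PZ := by
    simp [hμ, Fintype.expect_eq_sum_div_card, div_eq_inv_mul]
  have hbad :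
      m * 𝔼 u : Fin L ↪ X, exp (4 * L * t * (tv (empiricalMean PZX u) PZ - (μ + t))) < 1 := by
    rcases (Fintype.card K).eq_zero_or_pos with hK | hK
    · simp [m, hK]
    have hm : 0 < m := Nat.cast_pos.mpr hK
    have hLX : L ≤ Fintype.card X := hcard ▸ Nat.le_mul_of_pos_right L hK
    have hlog : 2 * L * t ^ 2 = log (m + 1) := by
      rw [sq_sqrt (div_nonneg (log_nonneg (by linarith)) (by positivity))]
      field_simp
    calc _ ≤ m * exp (-(2 * L * t ^ 2)) := by
          gcongr
          exact hμ' ▸ expect_exp_tv_embedding_le hLX hpos hsum PZ ht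
      _ = m / (m + 1) := by rw [hlog, exp_neg, exp_log (by positivity), div_eq_mul_inv]
      _ < 1 := by rw [div_lt_one (by positivity)]; linarith
  obtain ⟨σ, hσ⟩ := exists_equiv_forall_lt_one (Fintype.equivOfCardEq (by simp [hcard, mul_comm]))
    _ (fun _ => (exp_pos _).le) hbad
  refine ⟨fun x => (σ.symm x).1, fun k => ?_, Real.iSup_le (fun k => ?_) ?_⟩
  · rw [card_eq_sum_ones, sum_filter_fst_symm_eq σ (fun _ => 1) k]
    simp
  · simp only [sum_filter_fst_symm_eq σ (fun x => PZX x _) k, ← empiricalMean_apply]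
    have := neg_of_mul_neg_right (exp_lt_one_iff.mp (hσ k)) (by positivity)
    exact (sub_neg.mp this).le
  · exact add_nonneg (hμ' ▸ expect_nonneg fun v _ => tv_nonneg _ _) ht

/-- strong privacy amplification, existence form: if `|X| = L·|K|`
with `L` a positive integer, then there exists a balanced function `g : X → K`
(each preimage of size `L`) such that
`max_k d(P_{Z|g⁻¹(k)}, P_Z) ≤ μ + √(log(|K|+1)/(2L))`,
where `μ = E[d(P_{Z|𝒜}, P_Z)]` for an i.i.d. uniform codebook `𝒜` of size `L`. -/
theorem strong_privacy_amplification_exists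
    {X K Z : Type*} [Fintype X] [Fintype K] [Fintype Z]
    [DecidableEq X] [DecidableEq K]
    (L : ℕ) (hL : 0 < L) (hcard : Fintype.card X = L * Fintype.card K)
    (PZX : X → Z → ℝ)
    (hpos : ∀ x z, 0 ≤ PZX x z) (hsum : ∀ x, ∑ z, PZX x z = 1)
    (PZ : Z → ℝ) (hPZ : ∀ z, PZ z = (Fintype.card X : ℝ)⁻¹ * ∑ x, PZX x z)
    (μ : ℝ)
    (hμ : μ = ((Fintype.card X : ℝ) ^ L)⁻¹ *
        ∑ v : Fin L → X, tv (fun z => (L : ℝ)⁻¹ * ∑ i, PZX (v i) z) PZ) :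
    ∃ g : X → K,
      (∀ k, (univ.filter (fun x => g x = k)).card = L) ∧
      (⨆ k, tv (fun z =>
          (L : ℝ)⁻¹ * ∑ x ∈ univ.filter (fun x => g x = k), PZX x z) PZ)
        ≤ μ + Real.sqrt (Real.log ((Fintype.card K : ℝ) + 1) / (2 * L)) :=
  strong_privacy_amplification_exists_general L hL hcard PZX hpos hsum PZ μ hμ
end
end

section
/- Let X, K, Z be finite sets and P_{XZ} a probability distribution on X × Z with Z-marginal P_Z, and set L := |X|/|K| (a positive real). Then every function g : X → K satisfies S(g(X)|Z) ≥ E_L(P_{XZ}, Q_X^unif × P_Z). -/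
/-!
Write `c z := P_Z(z)/|K|`; since `L/|X| = 1/|K|`, the left side is `∑_{x,z} (P(x,z) - c z)⁺`.
Both `P_{g(X)Z}` and `Q_K^unif × P_Z` have the mass of `P_Z`, so the total variation distance
between them is `∑_{k,z} (P_{g(X)Z}(k,z) - c z)⁺`. The inequality is then fibre by fibre:
for nonnegative `p` and `c`, `t ↦ (t - c)⁺` is superadditive, so
`∑_{g x = k} (P(x,z) - c)⁺ ≤ (∑_{g x = k} P(x,z) - c)⁺`.
-/

open Finset

noncomputable section

lemma max_sub_add_max_sub_le {u v c : ℝ} (hu : 0 ≤ u) (hv : 0 ≤ v) (hc : 0 ≤ c) :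
    max (u - c) 0 + max (v - c) 0 ≤ max (u + v - c) 0 := by
  simp only [max_def]
  split_ifs <;> linarith

lemma sum_max_sub_le_max_sum_sub {ι : Type*} (s : Finset ι) {p : ι → ℝ}
    (hp : ∀ i ∈ s, 0 ≤ p i) {c : ℝ} (hc : 0 ≤ c) :
    ∑ i ∈ s, max (p i - c) 0 ≤ max (∑ i ∈ s, p i - c) 0 := by
  induction s using Finset.cons_induction with
  | empty => simp
  | cons i s hi ih =>
    have hs : ∀ j ∈ s, 0 ≤ p j := fun j hj => hp j (mem_cons_of_mem hj)
    rw [sum_cons, sum_cons]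
    calc max (p i - c) 0 + ∑ j ∈ s, max (p j - c) 0
        ≤ max (p i - c) 0 + max (∑ j ∈ s, p j - c) 0 := add_le_add_right (ih hs) _
      _ ≤ max (p i + ∑ j ∈ s, p j - c) 0 :=
        max_sub_add_max_sub_le (hp i (mem_cons_self i s)) (sum_nonneg hs) hc

lemma sum_max_sub_le_sum_fiberwise {α β : Type*} [Fintype α] [Fintype β] [DecidableEq β]
    (f : α → β) {p : α → ℝ} (hp : ∀ a, 0 ≤ p a) {c : ℝ} (hc : 0 ≤ c) :
    ∑ a, max (p a - c) 0 ≤ ∑ b, max (∑ a ∈ univ.filter (fun a => f a = b), p a - c) 0 := by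
  rw [← sum_fiberwise univ f]
  exact sum_le_sum fun b _ => sum_max_sub_le_max_sum_sub _ (fun a _ => hp a) hc

lemma Egamma_mul_right {A : Type*} [Fintype A] (γ δ : ℝ) (P Q : A → ℝ) :
    Egamma γ P (fun a => δ * Q a) = Egamma (γ * δ) P Q := by
  simp only [Egamma, mul_assoc]

lemma Egamma_le_Egamma_map_fst {X K Z : Type*} [Fintype X] [Fintype K] [Fintype Z]
    [DecidableEq K] (g : X → K) {P : X × Z → ℝ} (hP : ∀ q, 0 ≤ P q) {γ : ℝ} (hγ : 0 ≤ γ)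
    {R : Z → ℝ} (hR : ∀ z, 0 ≤ R z) :
    Egamma γ P (fun q => R q.2)
      ≤ Egamma γ (fun q : K × Z => ∑ x ∈ univ.filter (fun x => g x = q.1), P (x, q.2))
          (fun q => R q.2) := by
  simp only [Egamma, Fintype.sum_prod_type_right]
  exact sum_le_sum fun z _ =>
    sum_max_sub_le_sum_fiberwise g (fun x => hP (x, z)) (mul_nonneg hγ (hR z))

lemma tv_eq_Egamma_one {A : Type*} [Fintype A] {P Q : A → ℝ} (h : ∑ a, P a = ∑ a, Q a) :
    tv P Q = Egamma 1 P Q := by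
  have habs : ∀ t : ℝ, |t| = 2 * max t 0 - t := fun t => by
    linarith [max_zero_add_max_neg_zero_eq_abs_self t, max_zero_sub_eq_self t]
  simp only [tv, Egamma, one_mul, habs, sum_sub_distrib, ← mul_sum, h]
  ring

theorem privacy_amplification_converse_general
    {X K Z : Type*} [Fintype X] [Fintype K] [Fintype Z]
    [Nonempty X] [Nonempty K] [DecidableEq K]
    (PXZ : X × Z → ℝ)
    (hpos : ∀ q, 0 ≤ PXZ q)
    (L : ℝ) (hL : L = (Fintype.card X : ℝ) / (Fintype.card K : ℝ))
    (g : X → K) :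
    Egamma L PXZ
        (fun q : X × Z => (Fintype.card X : ℝ)⁻¹ * ∑ x, PXZ (x, q.2))
      ≤ tv (fun q : K × Z => ∑ x ∈ univ.filter (fun x => g x = q.1), PXZ (x, q.2))
           (fun q : K × Z => (Fintype.card K : ℝ)⁻¹ * ∑ x, PXZ (x, q.2)) := by
  have hX : (Fintype.card X : ℝ) ≠ 0 := Nat.cast_ne_zero.2 Fintype.card_ne_zero
  have hK : (Fintype.card K : ℝ) ≠ 0 := Nat.cast_ne_zero.2 Fintype.card_ne_zero
  have hscale : L * (Fintype.card X : ℝ)⁻¹ = 1 * (Fintype.card K : ℝ)⁻¹ := by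
    rw [hL]; field_simp
  have hmass : ∑ q : K × Z, ∑ x ∈ univ.filter (fun x => g x = q.1), PXZ (x, q.2)
      = ∑ q : K × Z, (Fintype.card K : ℝ)⁻¹ * ∑ x, PXZ (x, q.2) := by
    simp only [Fintype.sum_prod_type_right, sum_fiberwise, sum_const, card_univ, nsmul_eq_mul,
      ← mul_assoc, mul_inv_cancel₀ hK, one_mul]
  rw [tv_eq_Egamma_one hmass, Egamma_mul_right, Egamma_mul_right, hscale]
  exact Egamma_le_Egamma_map_fst g hpos (by positivity)
    fun z => sum_nonneg fun x _ => hpos (x, z)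

/-- privacy amplification converse: with `L = |X|/|K|`, every
function `g : X → K` satisfies
`S(g(X)|Z) = d(P_{g(X)Z}, Q_K^unif × P_Z) ≥ E_L(P_{XZ}, Q_X^unif × P_Z)`. -/
theorem privacy_amplification_converse
    {X K Z : Type*} [Fintype X] [Fintype K] [Fintype Z]
    [Nonempty X] [Nonempty K] [DecidableEq K]
    (PXZ : X × Z → ℝ)
    (hpos : ∀ q, 0 ≤ PXZ q) (hsum : ∑ q, PXZ q = 1)
    (L : ℝ) (hL : L = (Fintype.card X : ℝ) / (Fintype.card K : ℝ))
    (g : X → K) :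
    Egamma L PXZ
        (fun q : X × Z => (Fintype.card X : ℝ)⁻¹ * ∑ x, PXZ (x, q.2))
      ≤ tv (fun q : K × Z => ∑ x ∈ univ.filter (fun x => g x = q.1), PXZ (x, q.2))
           (fun q : K × Z => (Fintype.card K : ℝ)⁻¹ * ∑ x, PXZ (x, q.2)) :=
  privacy_amplification_converse_general PXZ hpos L hL g
end
end

section
/- Let X and Z be finite sets, P_{Z|X} a channel from X to Z, and C = {x₁,...,x_L} ⊆ X a finite subset of cardinality L. Then for every probability distribution Q_Z on Z, the resolvability output distribution P_{Z|C}(z) := (1/L)·Σ_{x∈C} P_{Z|X}(z|x) satisfies d(P_{Z|C}, Q_Z) ≥ E_L( Q_C^unif · P_{Z|X}, Q_C^unif × Q_Z ), where Q_C^unif · P_{Z|X} denotes the joint distribution on C × Z given by (x,z) ↦ (1/L)·P_{Z|X}(z|x). -/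
open Finset

noncomputable section

lemma max_sum_aux {X : Type*} (s : Finset X) (f : X → ℝ) (hf : ∀ x ∈ s, 0 ≤ f x)
    (Q : ℝ) (hQ : 0 ≤ Q) :
    ∑ x ∈ s, max (f x - Q) 0 ≤ max ((∑ x ∈ s, f x) - Q) 0 := by
  classical
  induction s using Finset.induction_on with
  | empty => simp [le_max_iff]
  | @insert a s hx ih =>
    rw [Finset.sum_insert hx, Finset.sum_insert hx]
    have h1 : ∑ x ∈ s, max (f x - Q) 0 ≤ max ((∑ x ∈ s, f x) - Q) 0 :=
      ih (fun x hxs => hf x (Finset.mem_insert_of_mem hxs))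
    have hfa : 0 ≤ f a := hf a (Finset.mem_insert_self a s)
    have hfs : 0 ≤ ∑ x ∈ s, f x :=
      Finset.sum_nonneg fun x hxs => hf x (Finset.mem_insert_of_mem hxs)
    have key : max (f a - Q) 0 + max ((∑ x ∈ s, f x) - Q) 0
        ≤ max (f a + (∑ x ∈ s, f x) - Q) 0 := by
      rcases le_or_gt (f a) Q with h | h <;> rcases le_or_gt (∑ x ∈ s, f x) Q with h2 | h2 <;>
        simp only [max_def] <;> split_ifs <;> linarith
    linarith
/-- channel resolvability converse: for every codebook `C ⊆ X` of
cardinality `L` and every distribution `Q_Z` on `Z`, the resolvability output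
distribution `P_{Z|C}(z) = (1/L)·∑_{x∈C} P_{Z|X}(z|x)` satisfies
`d(P_{Z|C}, Q_Z) ≥ E_L(Q_C^unif·P_{Z|X}, Q_C^unif × Q_Z)`, where the arguments of
`E_L` are distributions on `C × Z`. -/
theorem channel_resolvability_converse
    {X Z : Type*} [Fintype X] [Fintype Z]
    (PZX : X → Z → ℝ)
    (hpos : ∀ x z, 0 ≤ PZX x z) (hsum : ∀ x, ∑ z, PZX x z = 1)
    (C : Finset X) (L : ℕ) (hL : 0 < L) (hC : C.card = L)
    (QZ : Z → ℝ) (hQpos : ∀ z, 0 ≤ QZ z) (hQsum : ∑ z, QZ z = 1) :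
    Egamma (L : ℝ)
        (fun q : ↥C × Z => (L : ℝ)⁻¹ * PZX q.1.1 q.2)
        (fun q : ↥C × Z => (L : ℝ)⁻¹ * QZ q.2)
      ≤ tv (fun z => (L : ℝ)⁻¹ * ∑ x ∈ C, PZX x z) QZ := by
  classical
  have hLpos : (0:ℝ) < L := by exact_mod_cast hL
  set Pbar : Z → ℝ := fun z => (L : ℝ)⁻¹ * ∑ x ∈ C, PZX x z with hPbar
  -- sum of Pbar is 1
  have hPbarsum : ∑ z, Pbar z = 1 := by
    simp only [hPbar]
    rw [← Finset.mul_sum, Finset.sum_comm]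
    have : ∑ x ∈ C, ∑ z, PZX x z = L := by
      rw [Finset.sum_congr rfl (fun x _ => hsum x)]
      simp [hC]
    rw [this, inv_mul_cancel₀ (ne_of_gt hLpos)]
  -- tv equals sum of positive parts
  have htv : tv Pbar QZ = ∑ z, max (Pbar z - QZ z) 0 := by
    unfold tv
    have habs : ∀ z, |Pbar z - QZ z| = 2 * max (Pbar z - QZ z) 0 - (Pbar z - QZ z) := by
      intro z
      rcases le_total (Pbar z) (QZ z) with h | h
      · rw [abs_of_nonpos (by linarith), max_eq_right (by linarith)]; ring
      · rw [abs_of_nonneg (by linarith), max_eq_left (by linarith)]; ring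
    rw [Finset.sum_congr rfl (fun z _ => habs z), Finset.sum_sub_distrib,
      Finset.sum_sub_distrib, hPbarsum, hQsum, ← Finset.mul_sum]
    ring
  rw [htv]
  -- rewrite Egamma as iterated sum
  unfold Egamma
  rw [Fintype.sum_prod_type]
  have hswap : ∑ x : ↥C, ∑ z, max ((L : ℝ)⁻¹ * PZX x.1 z - (L:ℝ) * ((L : ℝ)⁻¹ * QZ z)) 0
      = ∑ z, ∑ x : ↥C, max ((L : ℝ)⁻¹ * PZX x.1 z - QZ z) 0 := by
    rw [Finset.sum_comm]
    congr 1; ext z; congr 1; ext x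
    rw [mul_inv_cancel_left₀ (ne_of_gt hLpos)]
  rw [hswap]
  apply Finset.sum_le_sum
  intro z _
  have := max_sum_aux C (fun x => (L : ℝ)⁻¹ * PZX x z)
    (fun x _ => mul_nonneg (by positivity) (hpos x z)) (QZ z) (hQpos z)
  rw [Finset.sum_coe_sort C (fun x => max ((L : ℝ)⁻¹ * PZX x z - QZ z) 0)]
  calc ∑ x ∈ C, max ((L : ℝ)⁻¹ * PZX x z - QZ z) 0
      ≤ max ((∑ x ∈ C, (L : ℝ)⁻¹ * PZX x z) - QZ z) 0 := this
    _ = max (Pbar z - QZ z) 0 := by rw [← Finset.mul_sum]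
end
end

section
/- Let P_{YZ|X} be a wiretap channel over finite sets X, Y, Z. If an (M, ε₀, δ₀)_max secrecy code exists for P_{YZ|X} and ε₀ ≤ ε < 1, then an (M, ε, δ)_max secrecy code exists for P_{YZ|X} with δ = δ₀·(1−ε)/(1−ε₀); that is, one can trade reliability for secrecy. -/
open Finset
open scoped Classical

noncomputable section

/-- trading reliability for secrecy: if an `(M, ε₀, δ₀)_max` secrecy
code exists for the wiretap channel `P_{YZ|X}` and `ε₀ ≤ ε < 1`, then an
`(M, ε, δ)_max` secrecy code exists with `δ = δ₀·(1−ε)/(1−ε₀)`. -/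
theorem trade_reliability_for_secrecy
    {X Y Z : Type*} [Fintype X] [Fintype Y] [Fintype Z]
    (PYZX : X → Y × Z → ℝ)
    (hchpos : ∀ x q, 0 ≤ PYZX x q) (hchsum : ∀ x, ∑ q, PYZX x q = 1)
    (PYX : X → Y → ℝ) (hPYX : ∀ x y, PYX x y = ∑ z, PYZX x (y, z))
    (PZX : X → Z → ℝ) (hPZX : ∀ x z, PZX x z = ∑ y, PYZX x (y, z))
    (M : ℕ) (hM : 0 < M)
    (ε₀ ε δ₀ : ℝ) (hε₀ε : ε₀ ≤ ε) (hε : ε < 1)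
    (hcode : ∃ (enc : Fin M → X → ℝ) (dec : Y → Fin M),
      (∀ m x, 0 ≤ enc m x) ∧ (∀ m, ∑ x, enc m x = 1) ∧
      (∀ m : Fin M,
        ∑ x, enc m x * ∑ y ∈ univ.filter (fun y => dec y ≠ m), PYX x y ≤ ε₀) ∧
      (∀ m : Fin M,
        tv (fun z => ∑ x, enc m x * PZX x z)
           (fun z => (M : ℝ)⁻¹ * ∑ m' : Fin M, ∑ x, enc m' x * PZX x z) ≤ δ₀)) :
    ∃ (enc : Fin M → X → ℝ) (dec : Y → Fin M),
      (∀ m x, 0 ≤ enc m x) ∧ (∀ m, ∑ x, enc m x = 1) ∧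
      (∀ m : Fin M,
        ∑ x, enc m x * ∑ y ∈ univ.filter (fun y => dec y ≠ m), PYX x y ≤ ε) ∧
      (∀ m : Fin M,
        tv (fun z => ∑ x, enc m x * PZX x z)
           (fun z => (M : ℝ)⁻¹ * ∑ m' : Fin M, ∑ x, enc m' x * PZX x z)
          ≤ δ₀ * (1 - ε) / (1 - ε₀)) := by
  obtain ⟨enc, dec, hpos, hsum, herr, hsec⟩ := hcode
  have hMR : (0:ℝ) < (M:ℝ) := by exact_mod_cast hM
  have h1ε₀ : (0:ℝ) < 1 - ε₀ := by linarith
  set l : ℝ := (1 - ε) / (1 - ε₀) with hl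
  have hl0 : 0 ≤ l := div_nonneg (by linarith) (le_of_lt h1ε₀)
  have hl1 : l ≤ 1 := by
    rw [hl, div_le_one h1ε₀]; linarith
  have hlkey : l * (1 - ε₀) = 1 - ε := div_mul_cancel₀ _ (ne_of_gt h1ε₀)
  -- average encoder
  set avg : X → ℝ := fun x => (M:ℝ)⁻¹ * ∑ m', enc m' x with havg
  have havgpos : ∀ x, 0 ≤ avg x := fun x =>
    mul_nonneg (inv_nonneg.2 (le_of_lt hMR)) (Finset.sum_nonneg fun m' _ => hpos m' x)
  have havgsum : ∑ x, avg x = 1 := by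
    rw [havg, ← Finset.mul_sum, Finset.sum_comm]
    simp only [hsum, Finset.sum_const, Finset.card_univ, Fintype.card_fin, nsmul_eq_mul, mul_one]
    exact inv_mul_cancel₀ (ne_of_gt hMR)
  set enc' : Fin M → X → ℝ := fun m x => l * enc m x + (1 - l) * avg x with henc'
  refine ⟨enc', dec, ?_, ?_, ?_, ?_⟩
  · intro m x
    exact add_nonneg (mul_nonneg hl0 (hpos m x)) (mul_nonneg (by linarith) (havgpos x))
  · intro m
    rw [henc']
    simp only [Finset.sum_add_distrib, ← Finset.mul_sum, hsum, havgsum]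
    ring
  · intro m
    -- error probability bound
    have hE1 : ∀ x, ∑ y ∈ univ.filter (fun y => dec y ≠ m), PYX x y ≤ 1 := by
      intro x
      have h1 : ∑ y ∈ univ.filter (fun y => dec y ≠ m), PYX x y ≤ ∑ y, PYX x y :=
        Finset.sum_le_sum_of_subset_of_nonneg (Finset.filter_subset _ _)
          (fun y _ _ => by
            rw [hPYX]; exact Finset.sum_nonneg fun z _ => hchpos x (y, z))
      have h2 : ∑ y, PYX x y = 1 := by
        simp only [hPYX]
        rw [← Fintype.sum_prod_type]
        exact hchsum x
      linarith
    have hE0 : ∀ x, 0 ≤ ∑ y ∈ univ.filter (fun y => dec y ≠ m), PYX x y := by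
      intro x
      refine Finset.sum_nonneg fun y _ => ?_
      rw [hPYX]; exact Finset.sum_nonneg fun z _ => hchpos x (y, z)
    have havgerr : ∑ x, avg x * ∑ y ∈ univ.filter (fun y => dec y ≠ m), PYX x y ≤ 1 := by
      calc ∑ x, avg x * ∑ y ∈ univ.filter (fun y => dec y ≠ m), PYX x y
          ≤ ∑ x, avg x * 1 := Finset.sum_le_sum fun x _ =>
            mul_le_mul_of_nonneg_left (hE1 x) (havgpos x)
        _ = 1 := by simpa using havgsum
    have hexp : ∑ x, enc' m x * ∑ y ∈ univ.filter (fun y => dec y ≠ m), PYX x y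
        = l * (∑ x, enc m x * ∑ y ∈ univ.filter (fun y => dec y ≠ m), PYX x y)
          + (1 - l) * (∑ x, avg x * ∑ y ∈ univ.filter (fun y => dec y ≠ m), PYX x y) := by
      rw [henc', Finset.mul_sum, Finset.mul_sum, ← Finset.sum_add_distrib]
      exact Finset.sum_congr rfl fun x _ => by ring
    rw [hexp]
    have := herr m
    nlinarith [mul_le_mul_of_nonneg_left (herr m) hl0,
      mul_le_mul_of_nonneg_left havgerr (by linarith : (0:ℝ) ≤ 1 - l)]
  · intro m
    -- secrecy bound
    set P : Fin M → Z → ℝ := fun m' z => ∑ x, enc m' x * PZX x z with hP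
    set Q : Z → ℝ := fun z => (M:ℝ)⁻¹ * ∑ m', P m' z with hQ
    have havgZ : ∀ z, ∑ x, avg x * PZX x z = Q z := by
      intro z
      rw [hQ, hP]
      simp only [havg]
      rw [Finset.sum_comm (s := univ) (t := univ) (f := fun m' x => enc m' x * PZX x z)]
      rw [Finset.mul_sum]
      exact Finset.sum_congr rfl fun x _ => by rw [mul_assoc, Finset.sum_mul]
    have hP' : ∀ m' z, ∑ x, enc' m' x * PZX x z = l * P m' z + (1 - l) * Q z := by
      intro m' z
      rw [henc']
      simp only
      rw [show ∑ x, (l * enc m' x + (1 - l) * avg x) * PZX x z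
          = l * ∑ x, enc m' x * PZX x z + (1 - l) * ∑ x, avg x * PZX x z by
        rw [Finset.mul_sum, Finset.mul_sum, ← Finset.sum_add_distrib]
        exact Finset.sum_congr rfl fun x _ => by ring]
      rw [havgZ]
    have hMne : (M:ℝ) ≠ 0 := ne_of_gt hMR
    have hQ' : ∀ z, (M:ℝ)⁻¹ * ∑ m', ∑ x, enc' m' x * PZX x z = Q z := by
      intro z
      simp only [hP', Finset.sum_add_distrib, ← Finset.mul_sum, Finset.sum_const,
        Finset.card_univ, Fintype.card_fin, nsmul_eq_mul, hQ]
      field_simp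
      ring
    have htv : tv (fun z => ∑ x, enc' m x * PZX x z)
        (fun z => (M:ℝ)⁻¹ * ∑ m' : Fin M, ∑ x, enc' m' x * PZX x z)
        = l * tv (P m) Q := by
      have hpt : ∀ z, |(∑ x, enc' m x * PZX x z)
          - ((M:ℝ)⁻¹ * ∑ m' : Fin M, ∑ x, enc' m' x * PZX x z)| = l * |P m z - Q z| := by
        intro z
        rw [hP' m z, hQ' z,
          show l * P m z + (1 - l) * Q z - Q z = l * (P m z - Q z) by ring,
          abs_mul, abs_of_nonneg hl0]
      unfold tv
      simp only [hpt]
      rw [← Finset.mul_sum]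
      ring
    rw [htv]
    have hold : tv (P m) Q ≤ δ₀ := hsec m
    calc l * tv (P m) Q ≤ l * δ₀ := mul_le_mul_of_nonneg_left hold hl0
      _ = δ₀ * (1 - ε) / (1 - ε₀) := by rw [hl]; ring
end
end
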